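/- arXiv:1502.02319 — 4 statements merged into one kernel-verified Lean document; each statement's English description precedes it below -/
import Mathlib

section
/- If I ⊆ ℝ is an interval and λ : I → C^n_sym is continuous, then there exist n continuous functions λ_1,...,λ_n : I → ℂ such that λ(t) = (λ_1(t),...,λ_n(t))* for all t ∈ I. -/
def permSetoid (n : ℕ) : Setoid (Fin n → ℂ) where
  r a b := ∃ π : Equiv.Perm (Fin n), a = b ∘ π
  iseqv := by
    constructor
    · exact fun a => ⟨Equiv.refl _, rfl⟩
    · rintro a b ⟨π, rfl⟩
      exact ⟨π.symm, by funext i; simp⟩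
    · rintro a b c ⟨π, rfl⟩ ⟨ρ, rfl⟩
      exact ⟨π.trans ρ, by funext i; simp⟩

noncomputable def symDist (n : ℕ) (a b : Fin n → ℂ) : ℝ :=
  ⨅ π : Equiv.Perm (Fin n), ⨆ i, dist (a i) (b (π i))

/-!
Induction on the number of entries. Where the entries of `λ(t₀)` are not all equal, they split
into two clusters that stay apart for `t` near `t₀`, and the induction hypothesis lifts each
cluster separately. Local lifts glue along compact subintervals (a connectedness argument) and
then along an exhaustion of the interval, so each connected component of the set where `λ(t)`
is not a single repeated value carries a lift. Where `λ(t₀)` is a single repeated value, every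
pointwise rearrangement is continuous at `t₀`, so these lifts assemble into a global one.
-/

open Set Filter Topology Metric

namespace Kato

variable {ι X : Type*} [MetricSpace X]

/-- Continuity of `t ↦ [g t]` in the space of unordered tuples, phrased through matchings so
that the representative `g` itself need not be continuous. -/
def SymContinuousOn (g : ℝ → ι → X) (S : Set ℝ) : Prop :=
  ∀ t₀ ∈ S, ∀ ε > 0, ∀ᶠ t in 𝓝[S] t₀, ∃ π : Equiv.Perm ι, ∀ i, dist (g t i) (g t₀ (π i)) < ε

def IsContinuousLiftOn (g F : ℝ → ι → X) (S : Set ℝ) : Prop :=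
  ContinuousOn F S ∧ ∀ t ∈ S, ∃ π : Equiv.Perm ι, F t = g t ∘ π

def LocallyLiftableOn (g : ℝ → ι → X) (J : Set ℝ) : Prop :=
  ∀ t ∈ J, ∃ U ∈ 𝓝[J] t, ∃ F, IsContinuousLiftOn g F U

variable {g F G : ℝ → ι → X} {S T D J : Set ℝ} {c : ℝ}

theorem SymContinuousOn.mono (hg : SymContinuousOn g S) (hT : T ⊆ S) : SymContinuousOn g T :=
  fun t₀ ht₀ ε hε => nhdsWithin_mono t₀ hT (hg t₀ (hT ht₀) ε hε)

theorem IsContinuousLiftOn.mono (hF : IsContinuousLiftOn g F S) (hT : T ⊆ S) :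
    IsContinuousLiftOn g F T :=
  ⟨hF.1.mono hT, fun t ht => hF.2 t (hT ht)⟩

theorem IsContinuousLiftOn.comp_perm (hF : IsContinuousLiftOn g F S) (σ : Equiv.Perm ι) :
    IsContinuousLiftOn g (fun t => F t ∘ σ) S := by
  refine ⟨continuousOn_pi.2 fun i => (continuous_apply (σ i)).comp_continuousOn hF.1,
    fun t ht => ?_⟩
  obtain ⟨π, hπ⟩ := hF.2 t ht
  exact ⟨σ.trans π, by simp only [hπ]; rfl⟩

theorem IsContinuousLiftOn.exists_perm_eq (hF : IsContinuousLiftOn g F S)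
    (hG : IsContinuousLiftOn g G T) (hS : c ∈ S) (hT : c ∈ T) :
    ∃ σ : Equiv.Perm ι, F c = G c ∘ σ := by
  obtain ⟨π₁, h₁⟩ := hF.2 c hS
  obtain ⟨π₂, h₂⟩ := hG.2 c hT
  exact ⟨π₁.trans π₂.symm, by rw [h₁, h₂]; ext i; simp⟩

theorem IsContinuousLiftOn.piecewise (hF : IsContinuousLiftOn g F (D ∩ Iic c))
    (hG : IsContinuousLiftOn g G (D ∩ Ici c)) (hFG : F c = G c) :
    IsContinuousLiftOn g (fun t => if t ≤ c then F t else G t) D := by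
  refine ⟨ContinuousOn.if (fun t ht => ?_) ?_ ?_, fun t ht => ?_⟩
  · rw [frontier_Iic_subset c ht.2, hFG]
  · rw [show {t | t ≤ c} = Iic c from rfl, closure_Iic]
    exact hF.1
  · rw [show {t | ¬t ≤ c} = Ioi c from ext fun t => not_le, closure_Ioi]
    exact hG.1
  · by_cases htc : t ≤ c
    · simpa [htc] using hF.2 t ⟨ht, htc⟩
    · simpa [htc] using hG.2 t ⟨ht, (not_le.1 htc).le⟩

theorem IsContinuousLiftOn.exists_glue_left (hc : c ∈ D) (hF : IsContinuousLiftOn g F (D ∩ Iic c))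
    (hG : IsContinuousLiftOn g G (D ∩ Ici c)) :
    ∃ H, IsContinuousLiftOn g H D ∧ EqOn H F (D ∩ Iic c) := by
  obtain ⟨σ, hσ⟩ := hF.exists_perm_eq hG ⟨hc, self_mem_Iic⟩ ⟨hc, self_mem_Ici⟩
  exact ⟨_, hF.piecewise (hG.comp_perm σ) hσ, fun t ht => if_pos ht.2⟩

theorem IsContinuousLiftOn.exists_glue_right (hc : c ∈ D)
    (hF : IsContinuousLiftOn g F (D ∩ Iic c)) (hG : IsContinuousLiftOn g G (D ∩ Ici c)) :
    ∃ H, IsContinuousLiftOn g H D ∧ EqOn H G (D ∩ Ici c) := by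
  obtain ⟨σ, hσ⟩ := hG.exists_perm_eq hF ⟨hc, self_mem_Ici⟩ ⟨hc, self_mem_Iic⟩
  refine ⟨_, (hF.comp_perm σ).piecewise hG hσ.symm, fun t ht => ?_⟩
  rcases eq_or_lt_of_le (mem_Ici.1 ht.2) with rfl | hct
  · simp [hσ]
  · exact if_neg (not_le.2 hct)

theorem exists_isContinuousLiftOn_inter_Icc (hJ : J.OrdConnected)
    (hloc : LocallyLiftableOn g J) {a b : ℝ}
    (ha : a ∈ J) (hb : b ∈ J) : ∃ F, IsContinuousLiftOn g F (J ∩ Icc a b) := by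
  refine hJ.isPreconnected.induction₂' (fun a b => ∃ F, IsContinuousLiftOn g F (J ∩ Icc a b))
    (fun x hx => ?_) (fun x y z _ hy _ => ?_) ha hb
  · obtain ⟨U, hU, F, hF⟩ := hloc x hx
    obtain ⟨ε, hε, hεU⟩ := Metric.mem_nhdsWithin_iff.1 hU
    have hball : (ball x ε).OrdConnected := (convex_ball x ε).ordConnected
    filter_upwards [mem_nhdsWithin_of_mem_nhds (ball_mem_nhds x hε)] with y hy
    have hxy : J ∩ uIcc x y ⊆ U :=
      fun s hs => hεU ⟨hball.uIcc_subset (mem_ball_self hε) hy hs.2, hs.1⟩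
    exact ⟨⟨F, hF.mono ((inter_subset_inter_right _ Icc_subset_uIcc).trans hxy)⟩,
      ⟨F, hF.mono ((inter_subset_inter_right _ Icc_subset_uIcc').trans hxy)⟩⟩
  · rintro ⟨F, hF⟩ ⟨G, hG⟩
    by_cases hxy : x ≤ y
    · by_cases hyz : y ≤ z
      · obtain ⟨H, hH, -⟩ := IsContinuousLiftOn.exists_glue_left (D := J ∩ Icc x z) ⟨hy, hxy, hyz⟩
          (hF.mono fun s hs => ⟨hs.1.1, hs.1.2.1, hs.2⟩)
          (hG.mono fun s hs => ⟨hs.1.1, hs.2, hs.1.2.2⟩)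
        exact ⟨H, hH⟩
      · exact ⟨F, hF.mono (inter_subset_inter_right _ (Icc_subset_Icc_right (not_le.1 hyz).le))⟩
    · exact ⟨G, hG.mono (inter_subset_inter_right _ (Icc_subset_Icc_left (not_le.1 hxy).le))⟩

theorem IsContinuousLiftOn.exists_extension_Icc (hJ : J.OrdConnected)
    (hloc : LocallyLiftableOn g J) {a b a' b' : ℝ}
    (ha' : a' ∈ J) (ha : a ∈ J) (hb : b ∈ J) (hb' : b' ∈ J) (ha'a : a' ≤ a) (hab : a ≤ b)
    (hbb' : b ≤ b') (hF : IsContinuousLiftOn g F (J ∩ Icc a b)) :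
    ∃ F', IsContinuousLiftOn g F' (J ∩ Icc a' b') ∧ EqOn F' F (J ∩ Icc a b) := by
  obtain ⟨G₁, hG₁⟩ := exists_isContinuousLiftOn_inter_Icc hJ hloc ha' ha
  obtain ⟨G₂, hG₂⟩ := exists_isContinuousLiftOn_inter_Icc hJ hloc hb hb'
  obtain ⟨H₁, hH₁, hH₁F⟩ := IsContinuousLiftOn.exists_glue_right (D := J ∩ Icc a' b)
    ⟨ha, ha'a, hab⟩ (hG₁.mono fun s hs => ⟨hs.1.1, hs.1.2.1, hs.2⟩)
    (hF.mono fun s hs => ⟨hs.1.1, hs.2, hs.1.2.2⟩)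
  obtain ⟨H₂, hH₂, hH₂H₁⟩ := IsContinuousLiftOn.exists_glue_left (D := J ∩ Icc a' b')
    ⟨hb, ha'a.trans hab, hbb'⟩ (hH₁.mono fun s hs => ⟨hs.1.1, hs.1.2.1, hs.2⟩)
    (hG₂.mono fun s hs => ⟨hs.1.1, hs.2, hs.1.2.2⟩)
  refine ⟨H₂, hH₂, fun t ht => ?_⟩
  rw [hH₂H₁ ⟨⟨ht.1, ha'a.trans ht.2.1, ht.2.2.trans hbb'⟩, ht.2.2⟩,
    hH₁F ⟨⟨ht.1, ha'a.trans ht.2.1, ht.2.2⟩, ht.2.1⟩]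

theorem exists_isContinuousLiftOn_of_exhaustion {D : ℕ → Set ℝ} (hD : Monotone D)
    (hJ : ∀ t ∈ J, ∃ k, D k ∈ 𝓝[J] t) (h₀ : ∃ F, IsContinuousLiftOn g F (D 0))
    (hext : ∀ k F, IsContinuousLiftOn g F (D k) →
      ∃ F', IsContinuousLiftOn g F' (D (k + 1)) ∧ EqOn F' F (D k)) :
    ∃ F, IsContinuousLiftOn g F J := by
  classical
  obtain ⟨F₀, hF₀⟩ := h₀
  have hnext : ∀ k F, ∃ F', IsContinuousLiftOn g F (D k) →
      IsContinuousLiftOn g F' (D (k + 1)) ∧ EqOn F' F (D k) := by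
    intro k F
    by_cases hF : IsContinuousLiftOn g F (D k)
    · obtain ⟨F', hF'⟩ := hext k F hF
      exact ⟨F', fun _ => hF'⟩
    · exact ⟨F, fun h => (hF h).elim⟩
  choose next hnext using hnext
  let seq : ℕ → ℝ → ι → X := fun k => Nat.rec F₀ next k
  have hseq : ∀ k, IsContinuousLiftOn g (seq k) (D k) := by
    intro k
    induction k with
    | zero => exact hF₀
    | succ k ih => exact (hnext k _ ih).1
  have hcompat : ∀ {j k}, j ≤ k → EqOn (seq k) (seq j) (D j) := by
    intro j k hjk
    induction hjk with
    | refl => exact eqOn_refl _ _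
    | step hle ih => exact fun t ht => ((hnext _ _ (hseq _)).2 (hD hle ht)).trans (ih ht)
  let F : ℝ → ι → X := fun t => if h : ∃ k, t ∈ D k then seq (Nat.find h) t else g t
  have hF : ∀ k, EqOn F (seq k) (D k) := by
    intro k t ht
    have h : ∃ k, t ∈ D k := ⟨k, ht⟩
    simp only [F, dif_pos h]
    exact (hcompat (Nat.find_min' h ht) (Nat.find_spec h)).symm
  refine ⟨F, fun t ht => ?_, fun t ht => ?_⟩
  · obtain ⟨k, hk⟩ := hJ t ht
    have htk := mem_of_mem_nhdsWithin ht hk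
    exact (((hseq k).1 t htk).mono_of_mem_nhdsWithin hk).congr_of_eventuallyEq
      (eventually_of_mem hk (hF k)) (hF k htk)
  · obtain ⟨k, hk⟩ := hJ t ht
    have htk := mem_of_mem_nhdsWithin ht hk
    rw [hF k htk]
    exact (hseq k).2 t htk

theorem exists_monotone_Iic_mem_nhdsWithin (hJ : J.OrdConnected) {t₀ : ℝ} (ht₀ : t₀ ∈ J) :
    ∃ b : ℕ → ℝ, Monotone b ∧ (∀ k, b k ∈ J) ∧ (∀ k, t₀ ≤ b k) ∧
      ∀ t ∈ J, ∃ k, Iic (b k) ∈ 𝓝[J] t := by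
  have : Nonempty J := ⟨⟨t₀, ht₀⟩⟩
  obtain ⟨xs, hxs, hlim⟩ := exists_seq_monotone_tendsto_atTop_atTop J
  have hcof : ∀ t ∈ J, ∃ k, t ≤ xs k := fun t ht => (hlim.eventually_ge_atTop ⟨t, ht⟩).exists
  refine ⟨fun k => max (xs k) t₀, fun k l hkl => max_le_max_right _ (hxs hkl), fun k => ?_,
    fun k => le_max_right _ _, fun t ht => ?_⟩
  · show max _ _ ∈ J
    rcases max_choice (xs k : ℝ) t₀ with h | h <;> rw [h]
    exacts [(xs k).2, ht₀]
  by_cases h : ∃ s ∈ J, t < s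
  · obtain ⟨s, hs, hts⟩ := h
    obtain ⟨k, hk⟩ := hcof s hs
    exact ⟨k, mem_nhdsWithin_of_mem_nhds (Iic_mem_nhds (hts.trans_le (le_max_of_le_left hk)))⟩
  · push Not at h
    obtain ⟨k, hk⟩ := hcof t ht
    exact ⟨k, mem_of_superset self_mem_nhdsWithin fun s hs => (h s hs).trans (le_max_of_le_left hk)⟩

theorem exists_antitone_Ici_mem_nhdsWithin (hJ : J.OrdConnected) {t₀ : ℝ} (ht₀ : t₀ ∈ J) :
    ∃ a : ℕ → ℝ, Antitone a ∧ (∀ k, a k ∈ J) ∧ (∀ k, a k ≤ t₀) ∧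
      ∀ t ∈ J, ∃ k, Ici (a k) ∈ 𝓝[J] t := by
  have : Nonempty J := ⟨⟨t₀, ht₀⟩⟩
  obtain ⟨xs, hxs, hlim⟩ := exists_seq_antitone_tendsto_atTop_atBot J
  have hcof : ∀ t ∈ J, ∃ k, xs k ≤ t := fun t ht => (hlim.eventually_le_atBot ⟨t, ht⟩).exists
  refine ⟨fun k => min (xs k) t₀, fun k l hkl => min_le_min_right _ (hxs hkl), fun k => ?_,
    fun k => min_le_right _ _, fun t ht => ?_⟩
  · show min _ _ ∈ J
    rcases min_choice (xs k : ℝ) t₀ with h | h <;> rw [h]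
    exacts [(xs k).2, ht₀]
  by_cases h : ∃ s ∈ J, s < t
  · obtain ⟨s, hs, hst⟩ := h
    obtain ⟨k, hk⟩ := hcof s hs
    exact ⟨k, mem_nhdsWithin_of_mem_nhds (Ici_mem_nhds ((min_le_of_left_le hk).trans_lt hst))⟩
  · push Not at h
    obtain ⟨k, hk⟩ := hcof t ht
    exact ⟨k, mem_of_superset self_mem_nhdsWithin fun s hs => (min_le_of_left_le hk).trans (h s hs)⟩

theorem exists_isContinuousLiftOn_of_locallyLiftableOn (hJ : J.OrdConnected)
    (hloc : LocallyLiftableOn g J) :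
    ∃ F, IsContinuousLiftOn g F J := by
  rcases J.eq_empty_or_nonempty with rfl | ⟨t₀, ht₀⟩
  · exact ⟨g, continuousOn_empty g, fun t ht => ht.elim⟩
  obtain ⟨a, ha, haJ, hat₀, haJ'⟩ := exists_antitone_Ici_mem_nhdsWithin hJ ht₀
  obtain ⟨b, hb, hbJ, hbt₀, hbJ'⟩ := exists_monotone_Iic_mem_nhdsWithin hJ ht₀
  refine exists_isContinuousLiftOn_of_exhaustion (D := fun k => J ∩ Icc (a k) (b k))
    (fun k l hkl => inter_subset_inter_right _ (Icc_subset_Icc (ha hkl) (hb hkl)))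
    (fun t ht => ?_) (exists_isContinuousLiftOn_inter_Icc hJ hloc (haJ 0) (hbJ 0))
    (fun k F hF => hF.exists_extension_Icc hJ hloc (haJ _) (haJ k) (hbJ k) (hbJ _)
      (ha k.le_succ) ((hat₀ k).trans (hbt₀ k)) (hb k.le_succ))
  obtain ⟨k₁, hk₁⟩ := haJ' t ht
  obtain ⟨k₂, hk₂⟩ := hbJ' t ht
  refine ⟨max k₁ k₂, inter_mem self_mem_nhdsWithin ?_⟩
  rw [← Ici_inter_Iic]
  exact inter_mem (mem_of_superset hk₁ (Ici_subset_Ici.2 (ha (le_max_left _ _))))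
    (mem_of_superset hk₂ (Iic_subset_Iic.2 (hb (le_max_right _ _))))

theorem connectedComponentIn_mem_nhdsWithin {S V : Set ℝ} (hS : S.OrdConnected) {t : ℝ}
    (ht : t ∈ S) (hV : V ∈ 𝓝[S] t) : connectedComponentIn V t ∈ 𝓝[S] t := by
  obtain ⟨ε, hε, hεV⟩ := Metric.mem_nhdsWithin_iff.1 hV
  have hc : (ball t ε ∩ S).OrdConnected := (convex_ball t ε).ordConnected.inter hS
  exact mem_of_superset (Metric.mem_nhdsWithin_iff.2 ⟨ε, hε, subset_rfl⟩)
    (hc.isPreconnected.subset_connectedComponentIn ⟨mem_ball_self hε, ht⟩ hεV)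

theorem SymContinuousOn.eventually_exists_ne (hg : SymContinuousOn g S) {t₀ : ℝ} (ht₀ : t₀ ∈ S)
    {i j : ι} (hij : g t₀ i ≠ g t₀ j) : ∀ᶠ t in 𝓝[S] t₀, ∃ i j, g t i ≠ g t j := by
  filter_upwards [hg t₀ ht₀ _ (half_pos (dist_pos.2 hij))] with t ⟨π, hπ⟩
  refine ⟨π.symm i, π.symm j, fun h => ?_⟩
  have hi := hπ (π.symm i)
  have hj := hπ (π.symm j)
  simp only [Equiv.apply_symm_apply] at hi hj
  rw [h] at hi
  linarith [dist_triangle_left (g t₀ i) (g t₀ j) (g t (π.symm j))]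

theorem continuousWithinAt_of_forall_eq [Fintype ι] (hg : SymContinuousOn g S)
    (hF : ∀ t ∈ S, ∃ π : Equiv.Perm ι, F t = g t ∘ π) {t₀ : ℝ} (ht₀ : t₀ ∈ S)
    (hconst : ∀ i j, g t₀ i = g t₀ j) : ContinuousWithinAt F S t₀ := by
  rw [ContinuousWithinAt, Metric.tendsto_nhds]
  intro ε hε
  filter_upwards [hg t₀ ht₀ ε hε, self_mem_nhdsWithin] with t ⟨π, hπ⟩ ht
  obtain ⟨σ, hσ⟩ := hF t ht
  obtain ⟨σ₀, hσ₀⟩ := hF t₀ ht₀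
  rw [dist_pi_lt_iff hε, hσ, hσ₀]
  intro i
  simpa [hconst _ (π (σ i))] using hπ (σ i)

theorem exists_isContinuousLiftOn_of_forall_ne [Fintype ι] (hS : S.OrdConnected)
    (hg : SymContinuousOn g S)
    (hloc : ∀ t ∈ S, (∃ i j, g t i ≠ g t j) → ∃ U ∈ 𝓝[S] t, ∃ F, IsContinuousLiftOn g F U) :
    ∃ F, IsContinuousLiftOn g F S := by
  classical
  set V := {t ∈ S | ∃ i j, g t i ≠ g t j}
  have hC : ∀ t ∈ V, connectedComponentIn V t ∈ 𝓝[S] t := fun t ⟨ht, _, _, hij⟩ =>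
    connectedComponentIn_mem_nhdsWithin hS ht
      (inter_mem self_mem_nhdsWithin (hg.eventually_exists_ne ht hij))
  have hCV : ∀ t, connectedComponentIn V t ⊆ V := fun t => connectedComponentIn_subset _ _
  have : Nonempty (ℝ → ι → X) := ⟨g⟩
  -- Choosing the lift per component (not per point) makes it locally constant in `t`.
  have hlift : ∀ K ∈ range (connectedComponentIn V), ∃ F, IsContinuousLiftOn g F K := by
    rintro _ ⟨t, rfl⟩
    refine exists_isContinuousLiftOn_of_locallyLiftableOn
      isPreconnected_connectedComponentIn.ordConnected fun s hs => ?_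
    obtain ⟨U, hU, F, hF⟩ := hloc s (hCV t hs).1 (hCV t hs).2
    exact ⟨U, nhdsWithin_mono s ((hCV t).trans (sep_subset _ _)) hU, F, hF⟩
  choose! L hL using hlift
  have hL' : ∀ t, IsContinuousLiftOn g (L (connectedComponentIn V t)) (connectedComponentIn V t) :=
    fun t => hL _ (mem_range_self t)
  let F : ℝ → ι → X := fun t => if t ∈ V then L (connectedComponentIn V t) t else g t
  have hF : ∀ t ∈ S, ∃ π : Equiv.Perm ι, F t = g t ∘ π := by
    intro t ht
    by_cases htV : t ∈ V
    · simpa [F, htV] using (hL' t).2 t (mem_connectedComponentIn htV)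
    · exact ⟨1, by simp [F, htV]⟩
  refine ⟨F, fun t ht => ?_, hF⟩
  by_cases htV : t ∈ V
  · have hEq : F =ᶠ[𝓝[S] t] L (connectedComponentIn V t) :=
      eventually_of_mem (hC t htV) fun s hs => by
        simp [F, hCV t hs, connectedComponentIn_eq hs]
    exact (((hL' t).1 t (mem_connectedComponentIn htV)).mono_of_mem_nhdsWithin
      (hC t htV)).congr_of_eventuallyEq hEq (hEq.eq_of_nhdsWithin ht)
  · refine continuousWithinAt_of_forall_eq hg hF ht fun i j => ?_
    by_contra hij
    exact htV ⟨ht, i, j, hij⟩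

/-- The gap between `ρ` and `3 * ρ` makes membership in `p` stable under matchings that move
every entry by less than `ρ`. -/
def IsIsolatedCluster (p : ι → Prop) (c : X) (ρ : ℝ) (x : ι → X) : Prop :=
  ∀ i, (p i → dist (x i) c < ρ) ∧ (¬p i → 3 * ρ < dist (x i) c)

theorem IsIsolatedCluster.iff_of_dist_lt {p : ι → Prop} {c : X} {ρ : ℝ} {x y : ι → X}
    (hx : IsIsolatedCluster p c ρ x) (hy : IsIsolatedCluster p c ρ y) {τ : Equiv.Perm ι}
    (hxy : ∀ i, dist (x i) (y (τ i)) < ρ) (i : ι) : p (τ i) ↔ p i := by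
  have hxyi := hxy i
  constructor
  · intro hτ
    by_contra hi
    linarith [(hx i).2 hi, (hy (τ i)).1 hτ, dist_triangle (x i) (y (τ i)) c,
      dist_nonneg (x := x i) (y := y (τ i))]
  · intro hi
    by_contra hτ
    linarith [(hx i).1 hi, (hy (τ i)).2 hτ, dist_triangle_left (y (τ i)) c (x i),
      dist_nonneg (x := x i) (y := y (τ i))]

theorem SymContinuousOn.subtype {U : Set ℝ} {p : ι → Prop} {σ : ℝ → Equiv.Perm ι} {ρ : ℝ}
    (hg : SymContinuousOn g U) (hρ : 0 < ρ)
    (hp : ∀ t ∈ U, ∀ s ∈ U, ∀ τ : Equiv.Perm ι,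
      (∀ i, dist (g t (σ t i)) (g s (σ s (τ i))) < ρ) → ∀ i, p (τ i) ↔ p i) :
    SymContinuousOn (fun t (a : Subtype p) => g t (σ t a)) U := by
  intro t₀ ht₀ ε hε
  filter_upwards [hg t₀ ht₀ _ (lt_min hε hρ), self_mem_nhdsWithin] with t ⟨μ, hμ⟩ ht
  let τ := (σ t).trans (μ.trans (σ t₀).symm)
  have hτ : ∀ i, dist (g t (σ t i)) (g t₀ (σ t₀ (τ i))) < min ε ρ := fun i => by
    simpa [τ] using hμ (σ t i)
  exact ⟨Equiv.Perm.subtypePerm τ (hp t ht t₀ ht₀ τ fun i => (hτ i).trans_le (min_le_right _ _)),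
    fun a => (hτ a).trans_le (min_le_left _ _)⟩

theorem IsContinuousLiftOn.dite {U : Set ℝ} {p : ι → Prop} [DecidablePred p]
    {σ : ℝ → Equiv.Perm ι} {H : ℝ → Subtype p → X} {K : ℝ → {i // ¬p i} → X}
    (hH : IsContinuousLiftOn (fun t (a : Subtype p) => g t (σ t a)) H U)
    (hK : IsContinuousLiftOn (fun t (a : {i // ¬p i}) => g t (σ t a)) K U) :
    IsContinuousLiftOn g (fun t i => if h : p i then H t ⟨i, h⟩ else K t ⟨i, h⟩) U := by
  refine ⟨continuousOn_pi.2 fun i => ?_, fun t ht => ?_⟩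
  · by_cases h : p i
    · simp only [dif_pos h]
      exact (continuous_apply (⟨i, h⟩ : Subtype p)).comp_continuousOn hH.1
    · simp only [dif_neg h]
      exact (continuous_apply (⟨i, h⟩ : {i // ¬p i})).comp_continuousOn hK.1
  · obtain ⟨π₁, h₁⟩ := hH.2 t ht
    obtain ⟨π₂, h₂⟩ := hK.2 t ht
    refine ⟨(π₁.subtypeCongr π₂).trans (σ t), funext fun i => ?_⟩
    by_cases h : p i <;> simp [h, h₁, h₂]

theorem exists_pos_lt_dist [Finite ι] (x : ι → X) (c : X) :
    ∃ ρ > 0, ∀ i, x i ≠ c → ρ < dist (x i) c := by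
  have : ∀ᶠ ρ in 𝓝[>] (0 : ℝ), ∀ i, x i ≠ c → ρ < dist (x i) c := by
    refine eventually_all.2 fun i => ?_
    by_cases hi : x i = c
    · exact Eventually.of_forall fun _ h => (h hi).elim
    · exact ((gt_mem_nhds (dist_pos.2 hi)).filter_mono nhdsWithin_le_nhds).mono fun _ h _ => h
  obtain ⟨ρ, hρ, hρ₀⟩ := (this.and self_mem_nhdsWithin).exists
  exact ⟨ρ, hρ₀, hρ⟩

theorem SymContinuousOn.exists_split [Finite ι] (hg : SymContinuousOn g S) (hS : S.OrdConnected)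
    {t₀ : ℝ} (ht₀ : t₀ ∈ S) {i j : ι} (hij : g t₀ i ≠ g t₀ j) :
    ∃ U ∈ 𝓝[S] t₀, U.OrdConnected ∧ ∃ (p : ι → Prop) (σ : ℝ → Equiv.Perm ι),
      (∃ k, ¬p k) ∧ (∃ k, p k) ∧
      SymContinuousOn (fun t (a : Subtype p) => g t (σ t a)) U ∧
      SymContinuousOn (fun t (a : {k // ¬p k}) => g t (σ t a)) U := by
  obtain ⟨ρ, hρ, hgap⟩ := exists_pos_lt_dist (g t₀) (g t₀ i)
  obtain ⟨δ, hδ, hδρ⟩ := Metric.mem_nhdsWithin_iff.1 (hg t₀ ht₀ (ρ / 4) (by positivity))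
  set U := ball t₀ δ ∩ S
  have hσ : ∀ t, ∃ σ : Equiv.Perm ι, t ∈ U → ∀ k, dist (g t (σ k)) (g t₀ k) < ρ / 4 := by
    intro t
    by_cases ht : t ∈ U
    · obtain ⟨π, hπ⟩ := hδρ ht
      exact ⟨π.symm, fun _ k => by simpa using hπ (π.symm k)⟩
    · exact ⟨1, fun h => (ht h).elim⟩
  choose σ hσ using hσ
  set p : ι → Prop := fun k => g t₀ k = g t₀ i
  have hsplit : ∀ t ∈ U, IsIsolatedCluster p (g t₀ i) (ρ / 4) (fun k => g t (σ t k)) := by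
    intro t ht k
    refine ⟨fun hk => hk ▸ hσ t ht k, fun hk => ?_⟩
    linarith [hgap k hk, hσ t ht k, dist_triangle_left (g t₀ k) (g t₀ i) (g t (σ t k))]
  have hp : ∀ t ∈ U, ∀ s ∈ U, ∀ τ : Equiv.Perm ι,
      (∀ k, dist (g t (σ t k)) (g s (σ s (τ k))) < ρ / 4) → ∀ k, p (τ k) ↔ p k :=
    fun t ht s hs _ hτ => (hsplit t ht).iff_of_dist_lt (hsplit s hs) hτ
  have hgU := hg.mono (inter_subset_right : U ⊆ S)
  exact ⟨U, Metric.mem_nhdsWithin_iff.2 ⟨δ, hδ, subset_rfl⟩,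
    (convex_ball t₀ δ).ordConnected.inter hS, p, σ, ⟨j, fun h => hij h.symm⟩, ⟨i, rfl⟩,
    hgU.subtype (by positivity) hp,
    hgU.subtype (by positivity) fun t ht s hs τ hτ k => not_congr (hp t ht s hs τ hτ k)⟩

theorem exists_isContinuousLiftOn [Fintype ι] (hS : S.OrdConnected) (hg : SymContinuousOn g S) :
    ∃ F, IsContinuousLiftOn g F S := by
  induction h : Fintype.card ι using Nat.strong_induction_on generalizing ι S g with
  | _ n ih =>
  classical
  refine exists_isContinuousLiftOn_of_forall_ne hS hg fun t₀ ht₀ ⟨i, j, hij⟩ => ?_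
  obtain ⟨U, hU, hUc, p, σ, ⟨k, hk⟩, ⟨l, hl⟩, hp, hnp⟩ := hg.exists_split hS ht₀ hij
  obtain ⟨H, hH⟩ := ih _ (h ▸ Fintype.card_subtype_lt hk) hUc hp rfl
  obtain ⟨K, hK⟩ := ih _ (h ▸ Fintype.card_subtype_lt (not_not.2 hl)) hUc hnp rfl
  exact ⟨U, hU, _, hH.dite hK⟩

end Kato

theorem exists_perm_dist_lt_of_symDist_lt {n : ℕ} {a b : Fin n → ℂ} {ε : ℝ}
    (h : symDist n a b < ε) : ∃ π : Equiv.Perm (Fin n), ∀ i, dist (a i) (b (π i)) < ε := by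
  obtain ⟨π, hπ⟩ := exists_lt_of_ciInf_lt h
  exact ⟨π, fun i => (le_ciSup (Finite.bddAbove_range _) i).trans_lt hπ⟩

/-- Kato's selection theorem: a continuous map from an interval `I ⊆ ℝ` into the
metric space `C^n_sym` of unordered `n`-tuples of complex numbers can be represented
by `n` continuous functions. -/
theorem kato_selection (n : ℕ) (m : MetricSpace (Quotient (permSetoid n)))
    (hm : ∀ a b : Fin n → ℂ,
      m.dist (Quotient.mk (permSetoid n) a) (Quotient.mk (permSetoid n) b) = symDist n a b)
    (I : Set ℝ) (hI : I.OrdConnected)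
    (lam : I → Quotient (permSetoid n))
    (hcont : @Continuous _ _ _ m.toUniformSpace.toTopologicalSpace lam) :
    ∃ f : Fin n → I → ℂ, (∀ i, Continuous (f i)) ∧
      ∀ t : I, lam t = Quotient.mk (permSetoid n) (fun i => f i t) := by
  classical
  let g : ℝ → Fin n → ℂ := fun t => if h : t ∈ I then (lam ⟨t, h⟩).out else 0
  have hg (t : I) : lam t = Quotient.mk (permSetoid n) (g t) := by simp [g, t.2]
  have hsym : Kato.SymContinuousOn g I := by
    intro t₀ ht₀ ε hε
    obtain ⟨δ, hδ, hlam⟩ :=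
      (@Metric.continuous_iff _ _ _ m.toPseudoMetricSpace lam).1 hcont ⟨t₀, ht₀⟩ ε hε
    refine Metric.mem_nhdsWithin_iff.2 ⟨δ, hδ, fun t ⟨htδ, ht⟩ => ?_⟩
    have := hlam ⟨t, ht⟩ htδ
    rw [hg, hg] at this
    exact exists_perm_dist_lt_of_symDist_lt ((hm _ _).symm.trans_lt this)
  obtain ⟨F, hFc, hF⟩ := Kato.exists_isContinuousLiftOn hI hsym
  refine ⟨fun i t => F t i, fun i => ((continuous_apply i).comp_continuousOn hFc).domRestrict,
    fun t => ?_⟩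
  obtain ⟨π, hπ⟩ := hF t t.2
  rw [hg]
  exact Quotient.sound (s := permSetoid n) ⟨π.symm, by ext i; simp [hπ]⟩
end

section
/- For any finite symmetric norm Φ on ℝ^n and any ξ, η ∈ ℝ_+^n, Φ(|ξ^↓_1 − η^↓_1|, ..., |ξ^↓_n − η^↓_n|) ≤ Φ(|ξ_1 − η_1|, ..., |ξ_n − η_n|), where ξ^↓ denotes the nonincreasing rearrangement of ξ. -/
/-- A finite symmetric norm on `ℝ^n`: a norm normalised by `Φ(1,0,…,0) = 1`
and invariant under permutations of coordinates and under replacing coordinates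
by their absolute values. -/
structure FiniteSymmetricNorm (n : ℕ) where
  toFun : (Fin n → ℝ) → ℝ
  nonneg : ∀ ξ, 0 ≤ toFun ξ
  eq_zero : ∀ ξ, toFun ξ = 0 → ξ = 0
  add_le : ∀ ξ η, toFun (ξ + η) ≤ toFun ξ + toFun η
  smul_eq : ∀ (c : ℝ) (ξ), toFun (c • ξ) = |c| * toFun ξ
  norm_single : ∀ h : 0 < n, toFun (fun i => if i = ⟨0, h⟩ then 1 else 0) = 1
  perm_invariant : ∀ (π : Equiv.Perm (Fin n)) (ξ), toFun (ξ ∘ π) = toFun ξ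
  abs_invariant : ∀ ξ, toFun (fun i => |ξ i|) = toFun ξ

/-- The nonincreasing rearrangement of a finite tuple of reals. -/
noncomputable def decSort {n : ℕ} (ξ : Fin n → ℝ) : Fin n → ℝ :=
  fun i => ξ (Tuple.sort ξ i.rev)

/-!
Write `u = |ξ↓ - η↓|` and `v = |ξ - η|`. For every threshold `t`, `ξ↓` and `η↓ + t` are both
dominated by the sorted pointwise maximum `m↓` of `ξ` and `η + t`, so
`∑ (ξ↓ᵢ - η↓ᵢ - t)⁺ ≤ ∑ (m↓ᵢ - η↓ᵢ - t) = ∑ (mᵢ - ηᵢ - t) = ∑ (ξᵢ - ηᵢ - t)⁺`.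
Adding the same inequality with `ξ` and `η` exchanged gives `∑ (uᵢ - t)⁺ ≤ ∑ (vᵢ - t)⁺` for
`t ≥ 0`, and choosing `t = v↓ₖ` turns this into the weak majorization `u ≺_w v` of prefix sums
of the sorted vectors.

A symmetric norm is monotone for `≺_w` on nonnegative vectors: by Hahn–Banach, `Φ(u↓)` is attained
by a functional `w` below `Φ`; sign and permutation invariance of `Φ` make the sorted `|w|↓` a
weight below `Φ` as well, and by the rearrangement inequality and Abel summation
`Φ(u) ≤ ∑ |w|↓ᵢ u↓ᵢ ≤ ∑ |w|↓ᵢ v↓ᵢ ≤ Φ(v)`.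
-/

open Finset

variable {n : ℕ}

noncomputable def decSortPerm (w : Fin n → ℝ) : Equiv.Perm (Fin n) :=
  Fin.revPerm.trans (Tuple.sort w)

theorem decSort_eq_comp (w : Fin n → ℝ) : decSort w = w ∘ decSortPerm w := rfl

theorem antitone_decSort (w : Fin n → ℝ) : Antitone (decSort w) :=
  fun _ _ hij => Tuple.monotone_sort w (Fin.rev_le_rev.2 hij)

theorem sum_comp_decSort (f : ℝ → ℝ) (w : Fin n → ℝ) :
    ∑ i, f (decSort w i) = ∑ i, f (w i) :=
  Equiv.sum_comp (decSortPerm w) (f ∘ w)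

theorem sum_decSort (w : Fin n → ℝ) : ∑ i, decSort w i = ∑ i, w i :=
  sum_comp_decSort id w

theorem le_decSort_iff (w : Fin n → ℝ) (a : ℝ) (j : Fin n) :
    a ≤ decSort w j ↔ (j : ℕ) < #{i | a ≤ w i} := by
  have hcard : #{i | a ≤ decSort w i} = #{i | a ≤ w i} :=
    card_equiv (decSortPerm w) (by simp only [mem_filter, mem_univ, true_and]; intro; rfl)
  rw [← hcard, Tuple.lt_card_ge_iff_apply_ge_of_antitone (antitone_decSort w)]

theorem decSort_add_le_decSort {u v : Fin n → ℝ} {s : ℝ} (h : ∀ j, u j + s ≤ v j) (i : Fin n) :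
    decSort u i + s ≤ decSort v i := by
  have hi : (i : ℕ) < #{j | decSort u i ≤ u j} := (le_decSort_iff u _ i).1 le_rfl
  refine (le_decSort_iff v _ i).2 (hi.trans_le (card_le_card fun j => ?_))
  simp only [mem_filter, mem_univ, true_and]
  exact fun hj => by linarith [h j]

theorem decSort_mono {u v : Fin n → ℝ} (h : u ≤ v) : decSort u ≤ decSort v := fun i => by
  simpa using decSort_add_le_decSort (s := 0) (fun j => by simpa using h j) i

theorem decSort_nonneg {w : Fin n → ℝ} (hw : 0 ≤ w) : 0 ≤ decSort w := fun i => hw (decSortPerm w i)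

def WeaklySubmajorizedBy (x y : Fin n → ℝ) : Prop :=
  ∀ k, ∑ i ∈ Iic k, decSort x i ≤ ∑ i ∈ Iic k, decSort y i

theorem sum_le_card_mul_add_sum_posPart_sub {ι : Type*} [Fintype ι] (a : ι → ℝ) (s : Finset ι)
    (t : ℝ) : ∑ i ∈ s, a i ≤ #s * t + ∑ i, (a i - t)⁺ :=
  calc ∑ i ∈ s, a i ≤ ∑ i ∈ s, (t + (a i - t)⁺) :=
        sum_le_sum fun i _ => by linarith [le_posPart (a i - t)]
    _ = #s * t + ∑ i ∈ s, (a i - t)⁺ := by rw [sum_add_distrib, sum_const, nsmul_eq_mul]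
    _ ≤ #s * t + ∑ i, (a i - t)⁺ := add_le_add le_rfl
        (sum_le_sum_of_subset_of_nonneg (subset_univ s) fun i _ _ => posPart_nonneg (a i - t))

theorem Antitone.sum_posPart_sub_apply {ι : Type*} [Fintype ι] [LinearOrder ι]
    [LocallyFiniteOrderBot ι] {a : ι → ℝ} (ha : Antitone a) (k : ι) :
    ∑ i, (a i - a k)⁺ = ∑ i ∈ Iic k, (a i - a k) := by
  rw [← sum_subset (subset_univ (Iic k)) fun i _ hi => ?_]
  · exact sum_congr rfl fun i hi => posPart_eq_self.2 (sub_nonneg.2 (ha (mem_Iic.1 hi)))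
  · exact posPart_eq_zero.2 (sub_nonpos.2 (ha (not_le.1 (mt mem_Iic.2 hi)).le))

theorem weaklySubmajorizedBy_of_sum_posPart_sub_le {x y : Fin n → ℝ} (hy : 0 ≤ y)
    (h : ∀ t, 0 ≤ t → ∑ i, (x i - t)⁺ ≤ ∑ i, (y i - t)⁺) : WeaklySubmajorizedBy x y := by
  intro k
  set t := decSort y k
  calc ∑ i ∈ Iic k, decSort x i ≤ #(Iic k) * t + ∑ i, (decSort x i - t)⁺ :=
        sum_le_card_mul_add_sum_posPart_sub _ _ t
    _ = #(Iic k) * t + ∑ i, (x i - t)⁺ := by rw [sum_comp_decSort (fun a => (a - t)⁺)]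
    _ ≤ #(Iic k) * t + ∑ i, (y i - t)⁺ := add_le_add le_rfl (h t (decSort_nonneg hy k))
    _ = #(Iic k) * t + ∑ i, (decSort y i - t)⁺ := by rw [sum_comp_decSort (fun a => (a - t)⁺)]
    _ = ∑ i ∈ Iic k, decSort y i := by
        rw [(antitone_decSort y).sum_posPart_sub_apply, sum_sub_distrib, sum_const, nsmul_eq_mul]
        ring

theorem sum_posPart_decSort_sub_sub_le (x y : Fin n → ℝ) (t : ℝ) :
    ∑ i, (decSort x i - decSort y i - t)⁺ ≤ ∑ i, (x i - y i - t)⁺ := by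
  set m : Fin n → ℝ := fun j => y j + t + (x j - y j - t)⁺
  have hxm : decSort x ≤ decSort m :=
    decSort_mono fun j => by linarith [le_posPart (x j - y j - t)]
  have hym (i : Fin n) : decSort y i + t ≤ decSort m i :=
    decSort_add_le_decSort (fun j => by linarith [posPart_nonneg (x j - y j - t)]) i
  calc ∑ i, (decSort x i - decSort y i - t)⁺ ≤ ∑ i, (decSort m i - (decSort y i + t)) :=
        sum_le_sum fun i _ => sup_le (by linarith [hxm i]) (by linarith [hym i])
    _ = ∑ i, decSort m i - ∑ i, (decSort y i + t) := sum_sub_distrib _ _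
    _ = ∑ i, m i - ∑ i, (y i + t) := by
        rw [sum_decSort, sum_comp_decSort (· + t)]
    _ = ∑ i, (x i - y i - t)⁺ := by
        rw [← sum_sub_distrib]
        exact sum_congr rfl fun j _ => by simp only [m]; ring

theorem posPart_abs_sub {α : Type*} [AddCommGroup α] [LinearOrder α] [IsOrderedAddMonoid α]
    (a : α) {t : α} (ht : 0 ≤ t) : (|a| - t)⁺ = (a - t)⁺ + (-a - t)⁺ := by
  rcases le_total 0 a with ha | ha
  · rw [abs_of_nonneg ha, posPart_eq_zero.2 (sub_nonpos.2 ((neg_nonpos.2 ha).trans ht)), add_zero]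
  · rw [abs_of_nonpos ha, posPart_eq_zero.2 (sub_nonpos.2 (ha.trans ht)), zero_add]

theorem weaklySubmajorizedBy_abs_decSort_sub (x y : Fin n → ℝ) :
    WeaklySubmajorizedBy (fun i => |decSort x i - decSort y i|) (fun i => |x i - y i|) := by
  refine weaklySubmajorizedBy_of_sum_posPart_sub_le (fun i => abs_nonneg _) fun t ht => ?_
  simp only [posPart_abs_sub _ ht, sum_add_distrib, neg_sub]
  exact add_le_add (sum_posPart_decSort_sub_sub_le x y t) (sum_posPart_decSort_sub_sub_le y x t)

theorem Antitone.sum_mul_nonneg_of_sum_Iic_nonneg {b d : Fin n → ℝ} (hb : Antitone b) (hb0 : 0 ≤ b)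
    (hd : ∀ k, 0 ≤ ∑ i ∈ Iic k, d i) : 0 ≤ ∑ i, b i * d i := by
  induction n with
  | zero => simp
  | succ n ih =>
    have hsplit : ∑ i, b i * d i = ∑ i : Fin n, (b i.castSucc - b (Fin.last n)) * d i.castSucc
        + b (Fin.last n) * ∑ i, d i := by
      simp only [Fin.sum_univ_castSucc, sub_mul, sum_sub_distrib, mul_add, mul_sum]
      ring
    have hprefix (k : Fin n) : ∑ i ∈ Iic k, d i.castSucc = ∑ i ∈ Iic k.castSucc, d i := by
      rw [← Fin.map_castSuccEmb_Iic, sum_map]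
      rfl
    rw [hsplit]
    refine add_nonneg (ih (fun i j hij => ?_) (fun i => ?_) fun k => ?_) (mul_nonneg (hb0 _) ?_)
    · exact sub_le_sub_right (hb (Fin.castSucc_le_castSucc_iff.2 hij)) _
    · exact sub_nonneg.2 (hb (Fin.le_last _))
    · exact (hprefix k).symm ▸ hd k.castSucc
    · simpa [← Fin.top_eq_last, Iic_top] using hd (Fin.last n)

theorem Antitone.sum_mul_le_sum_mul_of_weaklySubmajorizedBy {b x y : Fin n → ℝ} (hb : Antitone b)
    (hb0 : 0 ≤ b) (hxy : WeaklySubmajorizedBy x y) :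
    ∑ i, b i * decSort x i ≤ ∑ i, b i * decSort y i := by
  have := hb.sum_mul_nonneg_of_sum_Iic_nonneg hb0 (d := decSort y - decSort x) fun k => by
    simpa [sum_sub_distrib] using hxy k
  simpa [mul_sub, sum_sub_distrib] using this

namespace FiniteSymmetricNorm

variable (Φ : FiniteSymmetricNorm n)

theorem map_zero : Φ.toFun 0 = 0 := by
  simpa using Φ.smul_eq 0 0

theorem map_decSort (x : Fin n → ℝ) : Φ.toFun (decSort x) = Φ.toFun x :=
  Φ.perm_invariant (decSortPerm x) x

theorem map_eq_of_abs_eq {x y : Fin n → ℝ} (h : ∀ i, |x i| = |y i|) : Φ.toFun x = Φ.toFun y := by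
  rw [← Φ.abs_invariant x, ← Φ.abs_invariant y, funext h]

theorem exists_linearMap_le (x : Fin n → ℝ) :
    ∃ g : (Fin n → ℝ) →ₗ[ℝ] ℝ, g x = Φ.toFun x ∧ ∀ z, g z ≤ Φ.toFun z := by
  rcases eq_or_ne x 0 with rfl | hx
  · exact ⟨0, by simp [Φ.map_zero], Φ.nonneg⟩
  obtain ⟨g, hgx, hg⟩ := exists_extension_of_le_sublinear
    (LinearPMap.mkSpanSingleton x (Φ.toFun x) hx) Φ.toFun
    (fun c hc z => by rw [Φ.smul_eq, abs_of_pos hc]) Φ.add_le fun ⟨z, hz⟩ => by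
      obtain ⟨c, rfl⟩ := Submodule.mem_span_singleton.1 hz
      simp only [LinearPMap.mkSpanSingleton'_apply, smul_eq_mul, Φ.smul_eq]
      exact mul_le_mul_of_nonneg_right (le_abs_self c) (Φ.nonneg x)
  refine ⟨g, ?_, hg⟩
  rw [hgx ⟨x, Submodule.mem_span_singleton_self x⟩, LinearPMap.mkSpanSingleton_apply]

theorem exists_dual (x : Fin n → ℝ) :
    ∃ w : Fin n → ℝ, Φ.toFun x = ∑ i, w i * x i ∧ ∀ z, ∑ i, w i * z i ≤ Φ.toFun z := by
  obtain ⟨g, hgx, hg⟩ := Φ.exists_linearMap_le x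
  have hrep (z : Fin n → ℝ) : g z = ∑ i, g (Pi.single i 1) * z i := by
    conv_lhs => rw [← (Pi.basisFun ℝ (Fin n)).sum_repr z]
    simp [mul_comm]
  exact ⟨fun i => g (Pi.single i 1), hgx ▸ hrep x, fun z => hrep z ▸ hg z⟩

theorem sum_abs_comp_mul_abs_comp_le {w : Fin n → ℝ} (hw : ∀ z, ∑ i, w i * z i ≤ Φ.toFun z)
    (σ τ : Equiv.Perm (Fin n)) (z : Fin n → ℝ) :
    ∑ i, |w (σ i)| * |z (τ i)| ≤ Φ.toFun z := by
  set π := σ.symm.trans τ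
  set z' : Fin n → ℝ := fun j => if 0 ≤ w j then |z (π j)| else -|z (π j)|
  have hz' : Φ.toFun z' = Φ.toFun z := by
    rw [← Φ.perm_invariant π z]
    exact Φ.map_eq_of_abs_eq fun j => by simp only [z']; split_ifs <;> simp
  calc ∑ i, |w (σ i)| * |z (τ i)| = ∑ j, |w j| * |z (π j)| := by
        rw [← Equiv.sum_comp σ.symm]
        simp [π]
    _ = ∑ j, w j * z' j := sum_congr rfl fun j _ => by
        simp only [z']
        split_ifs with h
        · rw [abs_of_nonneg h]
        · rw [abs_of_neg (not_le.1 h)]; ring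
    _ ≤ Φ.toFun z := hz' ▸ hw z'

theorem le_of_weaklySubmajorizedBy {x y : Fin n → ℝ} (hx : 0 ≤ x) (hxy : WeaklySubmajorizedBy x y) :
    Φ.toFun x ≤ Φ.toFun y := by
  obtain ⟨w, hΦx, hw⟩ := Φ.exists_dual (decSort x)
  set σ := decSortPerm fun i => |w i|
  set b := decSort fun i => |w i|
  have hb0 : 0 ≤ b := decSort_nonneg fun i => abs_nonneg (w i)
  calc Φ.toFun x = ∑ i, w i * decSort x i := (Φ.map_decSort x).symm.trans hΦx
    _ ≤ ∑ i, b (σ.symm i) * decSort x i := sum_le_sum fun i _ => by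
        simp only [b, decSort_eq_comp, Function.comp_apply, σ, Equiv.apply_symm_apply]
        exact mul_le_mul_of_nonneg_right (le_abs_self _) (decSort_nonneg hx i)
    _ ≤ ∑ i, b i * decSort x i :=
        ((antitone_decSort _).monovary (antitone_decSort x)).sum_comp_perm_mul_le_sum_mul
    _ ≤ ∑ i, b i * decSort y i :=
        (antitone_decSort _).sum_mul_le_sum_mul_of_weaklySubmajorizedBy hb0 hxy
    _ ≤ ∑ i, |w (σ i)| * |y (decSortPerm y i)| :=
        sum_le_sum fun i _ => mul_le_mul_of_nonneg_left (le_abs_self _) (hb0 i)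
    _ ≤ Φ.toFun y := Φ.sum_abs_comp_mul_abs_comp_le hw σ (decSortPerm y) y

end FiniteSymmetricNorm

theorem finiteSymmetricNorm_decSort_sub_general (n : ℕ) (Φ : FiniteSymmetricNorm n)
    (ξ η : Fin n → ℝ) :
    Φ.toFun (fun i => |decSort ξ i - decSort η i|) ≤ Φ.toFun (fun i => |ξ i - η i|) :=
  Φ.le_of_weaklySubmajorizedBy (fun _ => abs_nonneg _) (weaklySubmajorizedBy_abs_decSort_sub ξ η)

/-- For any finite symmetric norm `Φ` on `ℝ^n` and nonnegative tuples `ξ, η`,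
`Φ(|ξ^↓ - η^↓|) ≤ Φ(|ξ - η|)`. -/
theorem finiteSymmetricNorm_decSort_sub (n : ℕ) (Φ : FiniteSymmetricNorm n)
    (ξ η : Fin n → ℝ) (hξ : ∀ i, 0 ≤ ξ i) (hη : ∀ i, 0 ≤ η i) :
    Φ.toFun (fun i => |decSort ξ i - decSort η i|) ≤ Φ.toFun (fun i => |ξ i - η i|) :=
  finiteSymmetricNorm_decSort_sub_general n Φ ξ η
end

section
/- Let Φ be a regular symmetric norm and ξ ∈ ℓ_Φ^+. For each n let ξ^(n) := (ξ_1,...,ξ_n,0,0,...). Then the nonincreasing rearrangements (ξ^(n))^↓ converge to ξ^↓ in the norm Φ as n → ∞. -/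
open Filter

/-- A symmetric norm: a norm on the space `c_00` of finitely supported real
sequences (modelled as `ℕ →₀ ℝ`), normalised by `Φ(1,0,0,…) = 1`, and invariant
under permutations of the entries and under replacing entries by their absolute
values. -/
structure SymmetricNorm where
  toFun : (ℕ →₀ ℝ) → ℝ
  nonneg : ∀ ξ, 0 ≤ toFun ξ
  eq_zero : ∀ ξ, toFun ξ = 0 → ξ = 0
  add_le : ∀ ξ η, toFun (ξ + η) ≤ toFun ξ + toFun η
  smul_eq : ∀ (c : ℝ) (ξ), toFun (c • ξ) = |c| * toFun ξ
  norm_single : toFun (Finsupp.single 0 1) = 1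
  perm_invariant : ∀ (π : Equiv.Perm ℕ) (ξ), toFun (Finsupp.equivMapDomain π ξ) = toFun ξ
  abs_invariant : ∀ (ξ : ℕ →₀ ℝ), toFun (Finsupp.mapRange (fun a => |a|) abs_zero ξ) = toFun ξ

/-- The truncation `(ξ_0, …, ξ_{n-1}, 0, 0, …)` of a sequence, as an element of `c_00`. -/
noncomputable def truncF (ξ : ℕ → ℝ) (n : ℕ) : ℕ →₀ ℝ :=
  ∑ i ∈ Finset.range n, Finsupp.single i (ξ i)

/-- The extension of a symmetric norm to sequences: `Φ(ξ) = lim_n Φ(ξ_0,…,ξ_{n-1},0,0,…)`. -/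
noncomputable def SymmetricNorm.ext (Φ : SymmetricNorm) (ξ : ℕ → ℝ) : ℝ :=
  limUnder atTop fun n => Φ.toFun (truncF ξ n)

/-- Membership in the natural domain `ℓ_Φ`: the sequence tends to `0` and the
`Φ`-norms of its truncations converge. -/
def MemLPhi (Φ : SymmetricNorm) (ξ : ℕ → ℝ) : Prop :=
  Tendsto ξ atTop (nhds 0) ∧ ∃ L, Tendsto (fun n => Φ.toFun (truncF ξ n)) atTop (nhds L)

/-- Membership in `ℓ_Φ^+`: nonnegative `Φ`-summable sequences. -/
def MemLPhiPlus (Φ : SymmetricNorm) (ξ : ℕ → ℝ) : Prop :=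
  (∀ i, 0 ≤ ξ i) ∧ MemLPhi Φ ξ

/-- A symmetric norm is regular if `Φ(ξ_{n+1}, ξ_{n+2}, …) → 0` for every `ξ ∈ ℓ_Φ`. -/
def SymmetricNorm.Regular (Φ : SymmetricNorm) : Prop :=
  ∀ ξ : ℕ → ℝ, MemLPhi Φ ξ →
    Tendsto (fun n => Φ.ext fun i => ξ (n + i)) atTop (nhds 0)

/-- `partialMax ξ k` is the supremum of sums of `k` distinct entries of `ξ`;
for nonnegative `ξ ∈ c_0` this equals `ξ^↓_1 + ⋯ + ξ^↓_k`. -/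
noncomputable def partialMax (ξ : ℕ → ℝ) (k : ℕ) : ℝ :=
  sSup ((fun s : Finset ℕ => ∑ i ∈ s, ξ i) '' {s | s.card = k})

/-- The nonincreasing rearrangement `ξ^↓` of a (nonnegative, null) sequence,
defined via `ξ^↓_1 = max ξ_i`, `ξ^↓_1 + ξ^↓_2 = max_{i ≠ j} (ξ_i + ξ_j)`, …. -/
noncomputable def decRearr (ξ : ℕ → ℝ) (k : ℕ) : ℝ :=
  partialMax ξ (k + 1) - partialMax ξ k

/-!
Write `μ = ξ^↓`. For nonnegative null `ξ`, `μ = ξ ∘ σ` where `σ` lists the indices greedily by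
decreasing value of `ξ`; since `Φ` is invariant under injective reindexing and monotone in the
absolute values of the entries, every truncation of `μ` has norm at most that of a truncation
of `ξ`, so `μ ∈ ℓ_Φ` and regularity makes the tails `Φ(μ_M, μ_{M+1}, …)` small. Once the
truncation `ξ^(n)` contains the first `M` greedy indices, `(ξ^(n))^↓` agrees with `μ` in its
first `M` entries and lies between `0` and `μ` everywhere, so `|(ξ^(n))^↓ - μ|` vanishes below
`M` and is dominated by `μ`: its norm is at most the tail `Φ(μ_M, μ_{M+1}, …)`.
-/

open Filter Topology Finset
open Finsupp (single)

theorem Finsupp.sum_single_apply {α M : Type*} [DecidableEq α] [AddCommMonoid M]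
    (s : Finset α) (f : α → M) (j : α) :
    (∑ i ∈ s, single i (f i)) j = if j ∈ s then f j else 0 := by
  rw [Finsupp.finsetSum_apply]
  simp only [Finsupp.single_apply]
  exact Finset.sum_ite_eq' s j f

theorem Equiv.Perm.exists_eqOn_of_injOn {α : Type*} [DecidableEq α] {e : α → α} {s : Finset α}
    (he : Set.InjOn e s) : ∃ π : Equiv.Perm α, ∀ i ∈ s, π i = e i := by
  induction s using Finset.induction_on with
  | empty => exact ⟨1, by simp⟩
  | insert a s ha ih =>
    obtain ⟨π, hπ⟩ := ih (he.mono (by simp))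
    refine ⟨π * Equiv.swap a (π.symm (e a)), fun i hi => ?_⟩
    rcases Finset.mem_insert.mp hi with rfl | hi
    · simp
    · have hia : i ≠ a := fun h => ha (h ▸ hi)
      have hib : i ≠ π.symm (e a) := by
        rintro rfl
        exact hia (he (by simp [hi]) (by simp) (by simpa using (hπ _ hi).symm))
      simp [Equiv.swap_apply_of_ne_of_ne hia hib, hπ i hi]

namespace SymmetricNorm

variable (Φ : SymmetricNorm)

theorem toFun_congr_abs {ζ ξ : ℕ →₀ ℝ} (h : ∀ j, |ζ j| = |ξ j|) : Φ.toFun ζ = Φ.toFun ξ := by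
  rw [← Φ.abs_invariant ζ, ← Φ.abs_invariant ξ]
  congr 1
  ext j
  simp [h j]

theorem toFun_update_mul_le (ξ : ℕ →₀ ℝ) (i : ℕ) {t : ℝ} (ht : |t| ≤ 1) :
    Φ.toFun (ξ.update i (t * ξ i)) ≤ Φ.toFun ξ := by
  obtain ⟨ht₁, ht₂⟩ := abs_le.mp ht
  have hflip : Φ.toFun (ξ.update i (-ξ i)) = Φ.toFun ξ :=
    Φ.toFun_congr_abs fun j => by
      rw [Finsupp.update_apply]
      split_ifs with h <;> simp [h]
  -- rescaling one coordinate by `t` is averaging `ξ` with its reflection in that coordinate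
  have hconv : ξ.update i (t * ξ i) = ((1 + t) / 2) • ξ + ((1 - t) / 2) • ξ.update i (-ξ i) := by
    ext j
    simp only [Finsupp.update_apply, Finsupp.add_apply, Finsupp.smul_apply, smul_eq_mul]
    split_ifs with h
    · subst h; ring
    · ring
  calc Φ.toFun (ξ.update i (t * ξ i))
      ≤ |(1 + t) / 2| * Φ.toFun ξ + |(1 - t) / 2| * Φ.toFun (ξ.update i (-ξ i)) := by
        rw [hconv, ← Φ.smul_eq, ← Φ.smul_eq]
        exact Φ.add_le _ _
    _ = Φ.toFun ξ := by
        rw [hflip, abs_of_nonneg (by linarith), abs_of_nonneg (by linarith)]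
        ring

theorem toFun_le_of_abs_le {ζ ξ : ℕ →₀ ℝ} (h : ∀ j, |ζ j| ≤ |ξ j|) :
    Φ.toFun ζ ≤ Φ.toFun ξ := by
  suffices ∀ s : Finset ℕ, ∀ ξ : ℕ →₀ ℝ, (∀ j, |ζ j| ≤ |ξ j|) → (∀ j ∉ s, ζ j = ξ j) →
      Φ.toFun ζ ≤ Φ.toFun ξ from
    this (ζ.support ∪ ξ.support) ξ h fun j hj => by simp_all
  intro s
  induction s using Finset.induction_on with
  | empty =>
    intro ξ _ hs
    rw [Finsupp.ext fun j => hs j (Finset.notMem_empty j)]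
  | insert a s ha ih =>
    intro ξ h hs
    -- also when `ξ a = 0` (where `ζ a / ξ a = 0`), since then `ζ a = 0` too
    have hscale : ζ a / ξ a * ξ a = ζ a := by
      rcases eq_or_ne (ξ a) 0 with h0 | h0
      · have hζa := h a
        rw [h0, abs_zero, abs_nonpos_iff] at hζa
        simp [h0, hζa]
      · field_simp
    have hupdate : ∀ j, (ξ.update a (ζ a / ξ a * ξ a)) j = if j = a then ζ a else ξ j := by
      intro j
      rw [Finsupp.update_apply, hscale]
    calc Φ.toFun ζ ≤ Φ.toFun (ξ.update a (ζ a / ξ a * ξ a)) := by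
          refine ih _ (fun j => ?_) (fun j hj => ?_) <;> rw [hupdate] <;> split_ifs with hja
          · rw [hja]
          · exact h j
          · rw [hja]
          · exact hs j (by simp [hja, hj])
      _ ≤ Φ.toFun ξ := by
          refine Φ.toFun_update_mul_le ξ a ?_
          rw [abs_div]
          exact div_le_one_of_le₀ (h a) (abs_nonneg _)

theorem toFun_sum_single_le {s t : Finset ℕ} {f g : ℕ → ℝ}
    (h : ∀ j ∈ s, f j ≠ 0 → j ∈ t ∧ |f j| ≤ |g j|) :
    Φ.toFun (∑ j ∈ s, single j (f j)) ≤ Φ.toFun (∑ j ∈ t, single j (g j)) := by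
  refine Φ.toFun_le_of_abs_le fun j => ?_
  simp only [Finsupp.sum_single_apply]
  by_cases hjs : j ∈ s ∧ f j ≠ 0
  · obtain ⟨hjt, hfg⟩ := h j hjs.1 hjs.2
    simpa [hjs.1, hjt] using hfg
  · rw [not_and_or, not_not] at hjs
    rcases hjs with hjs | hjs <;> simp [hjs]

theorem toFun_sum_single_comp {e : ℕ → ℕ} {s : Finset ℕ} (he : Set.InjOn e s) (f : ℕ → ℝ) :
    Φ.toFun (∑ i ∈ s, single (e i) (f i)) = Φ.toFun (∑ i ∈ s, single i (f i)) := by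
  obtain ⟨π, hπ⟩ := Equiv.Perm.exists_eqOn_of_injOn he
  calc Φ.toFun (∑ i ∈ s, single (e i) (f i))
      = Φ.toFun (Finsupp.equivMapDomain π (∑ i ∈ s, single i (f i))) := by
        simp only [Finsupp.equivMapDomain_eq_mapDomain, Finsupp.mapDomain_finsetSum,
          Finsupp.mapDomain_single]
        exact congrArg _ (Finset.sum_congr rfl fun i hi => by rw [hπ i hi])
    _ = Φ.toFun (∑ i ∈ s, single i (f i)) := Φ.perm_invariant π _

theorem monotone_toFun_truncF (g : ℕ → ℝ) : Monotone fun n => Φ.toFun (truncF g n) :=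
  fun _ _ hmn => Φ.toFun_sum_single_le fun _ hj _ => ⟨range_subset_range.2 hmn hj, le_rfl⟩

variable {Φ} {f g : ℕ → ℝ}

theorem tendsto_toFun_truncF (hg : BddAbove (Set.range fun n => Φ.toFun (truncF g n))) :
    Tendsto (fun n => Φ.toFun (truncF g n)) atTop (𝓝 (Φ.ext g)) := by
  have hsup := tendsto_atTop_ciSup (Φ.monotone_toFun_truncF g) hg
  rwa [SymmetricNorm.ext, hsup.limUnder_eq]

theorem toFun_truncF_le_ext (hg : BddAbove (Set.range fun n => Φ.toFun (truncF g n))) (n : ℕ) :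
    Φ.toFun (truncF g n) ≤ Φ.ext g :=
  (Φ.monotone_toFun_truncF g).ge_of_tendsto (tendsto_toFun_truncF hg) n

theorem ext_nonneg (hg : BddAbove (Set.range fun n => Φ.toFun (truncF g n))) : 0 ≤ Φ.ext g :=
  (Φ.nonneg _).trans (toFun_truncF_le_ext hg 0)

theorem ext_le_of_forall_toFun_truncF_le {C : ℝ} (h : ∀ n, Φ.toFun (truncF g n) ≤ C) :
    Φ.ext g ≤ C :=
  le_of_tendsto' (tendsto_toFun_truncF ⟨C, Set.forall_mem_range.2 h⟩) h

theorem bddAbove_toFun_truncF_of_abs_le (hfg : ∀ i, |f i| ≤ |g i|)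
    (hg : BddAbove (Set.range fun n => Φ.toFun (truncF g n))) :
    BddAbove (Set.range fun n => Φ.toFun (truncF f n)) := by
  obtain ⟨C, hC⟩ := hg
  exact ⟨C, Set.forall_mem_range.2 fun n =>
    (Φ.toFun_sum_single_le fun j hj _ => ⟨hj, hfg j⟩).trans (hC ⟨n, rfl⟩)⟩

variable (Φ) in
theorem toFun_truncF_shift (g : ℕ → ℝ) (m n : ℕ) :
    Φ.toFun (truncF (fun i => g (m + i)) n) = Φ.toFun (∑ j ∈ Ico m (m + n), single j (g j)) := by
  rw [sum_Ico_eq_sum_range, add_tsub_cancel_left,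
    Φ.toFun_sum_single_comp (e := (m + ·)) (add_right_injective m).injOn (fun i => g (m + i))]
  rfl

theorem bddAbove_toFun_truncF_shift (hg : BddAbove (Set.range fun n => Φ.toFun (truncF g n)))
    (m : ℕ) : BddAbove (Set.range fun n => Φ.toFun (truncF (fun i => g (m + i)) n)) := by
  obtain ⟨C, hC⟩ := hg
  refine ⟨C, Set.forall_mem_range.2 fun n => ?_⟩
  rw [toFun_truncF_shift]
  refine (Φ.toFun_sum_single_le fun j hj _ => ⟨?_, le_rfl⟩).trans (hC ⟨m + n, rfl⟩)
  exact mem_range.2 (mem_Ico.1 hj).2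

theorem ext_le_ext_shift {m : ℕ} (hf : ∀ i < m, f i = 0) (hfg : ∀ i, |f i| ≤ |g i|)
    (hg : BddAbove (Set.range fun n => Φ.toFun (truncF g n))) :
    Φ.ext f ≤ Φ.ext fun i => g (m + i) := by
  refine ext_le_of_forall_toFun_truncF_le fun n => ?_
  calc Φ.toFun (truncF f n) ≤ Φ.toFun (∑ j ∈ Ico m (m + n), single j (g j)) := by
        refine Φ.toFun_sum_single_le fun j hj hfj => ⟨?_, hfg j⟩
        have hmj : m ≤ j := not_lt.1 fun hjm => hfj (hf j hjm)
        have hjn := mem_range.1 hj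
        exact mem_Ico.2 ⟨hmj, by omega⟩
    _ = Φ.toFun (truncF (fun i => g (m + i)) n) := (Φ.toFun_truncF_shift g m n).symm
    _ ≤ Φ.ext fun i => g (m + i) := toFun_truncF_le_ext (bddAbove_toFun_truncF_shift hg m) n

end SymmetricNorm

def AttainsMaxOff (ξ : ℕ → ℝ) : Prop :=
  ∀ F : Finset ℕ, ∃ j ∉ F, ∀ i ∉ F, ξ i ≤ ξ j

theorem attainsMaxOff_of_tendsto_zero {ξ : ℕ → ℝ} (hpos : ∀ i, 0 ≤ ξ i)
    (h0 : Tendsto ξ atTop (𝓝 0)) : AttainsMaxOff ξ := by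
  intro F
  by_cases hz : ∀ i ∉ F, ξ i ≤ 0
  · obtain ⟨j, hj⟩ := Infinite.exists_notMem_finset F
    exact ⟨j, hj, fun i hi => (hz i hi).trans (hpos j)⟩
  push Not at hz
  obtain ⟨i₀, hi₀F, hi₀⟩ := hz
  obtain ⟨N, hN⟩ := eventually_atTop.mp (h0.eventually (gt_mem_nhds hi₀))
  have hi₀T : i₀ ∈ insert i₀ (range N) \ F := by simp [hi₀F]
  obtain ⟨j, hj, hjmax⟩ := exists_max_image (insert i₀ (range N) \ F) ξ ⟨i₀, hi₀T⟩
  refine ⟨j, (mem_sdiff.mp hj).2, fun i hi => ?_⟩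
  by_cases hiN : i < N
  · exact hjmax i (by simp [hiN, hi])
  · exact (hN i (not_lt.mp hiN)).le.trans (hjmax i₀ hi₀T)

/-- Junk value unless `AttainsMaxOff ξ`. -/
noncomputable def argmaxOff (ξ : ℕ → ℝ) (F : Finset ℕ) : ℕ :=
  Classical.epsilon fun j => j ∉ F ∧ ∀ i ∉ F, ξ i ≤ ξ j

noncomputable def greedySet (ξ : ℕ → ℝ) : ℕ → Finset ℕ
  | 0 => ∅
  | k + 1 => insert (argmaxOff ξ (greedySet ξ k)) (greedySet ξ k)

noncomputable def greedyEnum (ξ : ℕ → ℝ) (k : ℕ) : ℕ :=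
  argmaxOff ξ (greedySet ξ k)

theorem greedySet_succ (ξ : ℕ → ℝ) (k : ℕ) :
    greedySet ξ (k + 1) = insert (greedyEnum ξ k) (greedySet ξ k) :=
  rfl

theorem greedySet_eq_image (ξ : ℕ → ℝ) (k : ℕ) :
    greedySet ξ k = (range k).image (greedyEnum ξ) := by
  induction k with
  | zero => rfl
  | succ k ih => rw [greedySet_succ, ih, range_add_one, image_insert]

theorem greedySet_mono (ξ : ℕ → ℝ) : Monotone (greedySet ξ) := fun _ _ hkl => by
  simp only [greedySet_eq_image]
  exact image_subset_image (range_subset_range.2 hkl)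

namespace AttainsMaxOff

variable {ξ : ℕ → ℝ} (hξ : AttainsMaxOff ξ)
include hξ

theorem argmaxOff_spec (F : Finset ℕ) :
    argmaxOff ξ F ∉ F ∧ ∀ i ∉ F, ξ i ≤ ξ (argmaxOff ξ F) :=
  Classical.epsilon_spec (hξ F)

theorem greedyEnum_notMem (k : ℕ) : greedyEnum ξ k ∉ greedySet ξ k :=
  (hξ.argmaxOff_spec _).1

theorem le_greedyEnum {k i : ℕ} (hi : i ∉ greedySet ξ k) : ξ i ≤ ξ (greedyEnum ξ k) :=
  (hξ.argmaxOff_spec _).2 i hi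

theorem greedyEnum_injective : Function.Injective (greedyEnum ξ) := by
  intro i j hij
  by_contra hne
  wlog hlt : i < j generalizing i j
  · exact this hij.symm (Ne.symm hne) (by omega)
  apply hξ.greedyEnum_notMem j
  rw [← hij, greedySet_eq_image]
  exact mem_image_of_mem _ (mem_range.2 hlt)

theorem card_greedySet (k : ℕ) : (greedySet ξ k).card = k := by
  rw [greedySet_eq_image, card_image_of_injective _ hξ.greedyEnum_injective, card_range]

theorem sum_le_sum_greedySet {k : ℕ} {s : Finset ℕ} (hs : s.card = k) :
    ∑ i ∈ s, ξ i ≤ ∑ i ∈ greedySet ξ k, ξ i := by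
  induction k generalizing s with
  | zero => simp [card_eq_zero.mp hs, greedySet]
  | succ k ih =>
    by_cases hsub : s ⊆ greedySet ξ (k + 1)
    · rw [eq_of_subset_of_card_le hsub (by rw [hs, hξ.card_greedySet])]
    -- exchange an entry of `s` outside the greedy set for the greedy choice
    obtain ⟨j, hjs, hjg⟩ := not_subset.mp hsub
    have hj : ξ j ≤ ξ (greedyEnum ξ k) :=
      hξ.le_greedyEnum fun h => hjg (greedySet_mono ξ k.le_succ h)
    calc ∑ i ∈ s, ξ i = ∑ i ∈ s.erase j, ξ i + ξ j := (sum_erase_add s ξ hjs).symm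
      _ ≤ ∑ i ∈ greedySet ξ k, ξ i + ξ (greedyEnum ξ k) :=
          add_le_add (ih (by rw [card_erase_of_mem hjs, hs]; rfl)) hj
      _ = ∑ i ∈ greedySet ξ (k + 1), ξ i := by
          rw [greedySet_succ, sum_insert (hξ.greedyEnum_notMem k), add_comm]

theorem partialMax_eq (k : ℕ) : partialMax ξ k = ∑ i ∈ greedySet ξ k, ξ i := by
  refine IsGreatest.csSup_eq ⟨⟨greedySet ξ k, hξ.card_greedySet k, rfl⟩, ?_⟩
  rintro x ⟨s, hs, rfl⟩
  exact hξ.sum_le_sum_greedySet hs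

theorem decRearr_eq (k : ℕ) : decRearr ξ k = ξ (greedyEnum ξ k) := by
  rw [decRearr, hξ.partialMax_eq, hξ.partialMax_eq, greedySet_succ,
    sum_insert (hξ.greedyEnum_notMem k), add_sub_cancel_right]

theorem decRearr_le_of_mem_greedySet {k j : ℕ} (hj : j ∈ greedySet ξ (k + 1)) :
    decRearr ξ k ≤ ξ j := by
  rw [greedySet_eq_image] at hj
  obtain ⟨i, hi, rfl⟩ := mem_image.mp hj
  rw [hξ.decRearr_eq]
  exact hξ.le_greedyEnum fun h =>
    hξ.greedyEnum_notMem k (greedySet_mono ξ (Nat.lt_succ_iff.mp (mem_range.mp hi)) h)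

theorem le_decRearr_of_lt_card {k : ℕ} {c : ℝ} {A : Finset ℕ} (hA : k < A.card)
    (hc : ∀ j ∈ A, c ≤ ξ j) : c ≤ decRearr ξ k := by
  by_contra hlt
  rw [not_le, hξ.decRearr_eq] at hlt
  have hsub : A ⊆ greedySet ξ k := fun j hj => by
    by_contra hjg
    exact (hc j hj).not_gt (lt_of_le_of_lt (hξ.le_greedyEnum hjg) hlt)
  have := card_le_card hsub
  rw [hξ.card_greedySet] at this
  omega

end AttainsMaxOff

theorem decRearr_le_decRearr {f g : ℕ → ℝ} (hf : AttainsMaxOff f) (hg : AttainsMaxOff g) {k : ℕ}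
    (h : ∀ j ∈ greedySet f (k + 1), f j ≤ g j) : decRearr f k ≤ decRearr g k :=
  hg.le_decRearr_of_lt_card (by rw [hf.card_greedySet]; exact k.lt_succ_self) fun j hj =>
    (hf.decRearr_le_of_mem_greedySet hj).trans (h j hj)

theorem AttainsMaxOff.decRearr_nonneg {ξ : ℕ → ℝ} (hξ : AttainsMaxOff ξ) (hpos : ∀ i, 0 ≤ ξ i)
    (k : ℕ) : 0 ≤ decRearr ξ k := by
  rw [hξ.decRearr_eq]
  exact hpos _

theorem tendsto_decRearr_zero {ξ : ℕ → ℝ} (hpos : ∀ i, 0 ≤ ξ i) (h0 : Tendsto ξ atTop (𝓝 0)) :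
    Tendsto (decRearr ξ) atTop (𝓝 0) := by
  have hξ := attainsMaxOff_of_tendsto_zero hpos h0
  -- the `k + 1` greedy indices cannot all lie below `k`
  have hlarge : ∀ k, ∃ j ∈ greedySet ξ (k + 1), k ≤ j := fun k => by
    by_contra! hall
    have := card_le_card fun j hj => mem_range.2 (hall j hj)
    rw [hξ.card_greedySet, card_range] at this
    omega
  choose j hjg hkj using hlarge
  exact squeeze_zero (hξ.decRearr_nonneg hpos) (fun k => hξ.decRearr_le_of_mem_greedySet (hjg k))
    (h0.comp (tendsto_atTop_mono hkj tendsto_id))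

theorem SymmetricNorm.toFun_truncF_decRearr (Φ : SymmetricNorm) {ξ : ℕ → ℝ} (hξ : AttainsMaxOff ξ)
    (m : ℕ) : Φ.toFun (truncF (decRearr ξ) m) = Φ.toFun (∑ j ∈ greedySet ξ m, single j (ξ j)) := by
  have hinj := hξ.greedyEnum_injective.injOn (s := range m)
  rw [greedySet_eq_image, sum_image hinj,
    Φ.toFun_sum_single_comp hinj fun i => ξ (greedyEnum ξ i)]
  simp only [truncF, hξ.decRearr_eq]

theorem memLPhi_decRearr {Φ : SymmetricNorm} {ξ : ℕ → ℝ} (hξ : MemLPhiPlus Φ ξ) :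
    MemLPhi Φ (decRearr ξ) := by
  obtain ⟨hpos, h0, L, hL⟩ := hξ
  have hmax := attainsMaxOff_of_tendsto_zero hpos h0
  refine ⟨tendsto_decRearr_zero hpos h0, Φ.ext _, SymmetricNorm.tendsto_toFun_truncF ?_⟩
  obtain ⟨C, hC⟩ := hL.bddAbove_range
  refine ⟨C, Set.forall_mem_range.2 fun m => ?_⟩
  obtain ⟨N, hN⟩ := exists_nat_subset_range (greedySet ξ m)
  rw [Φ.toFun_truncF_decRearr hmax]
  exact (Φ.toFun_sum_single_le fun j hj _ => ⟨hN hj, le_rfl⟩).trans (hC ⟨N, rfl⟩)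

section Truncation

variable {ξ : ℕ → ℝ} (hpos : ∀ i, 0 ≤ ξ i)

include hpos in
theorem attainsMaxOff_trunc (n : ℕ) : AttainsMaxOff fun j => if j < n then ξ j else 0 := by
  refine attainsMaxOff_of_tendsto_zero (fun j => by split_ifs; exacts [hpos j, le_rfl]) ?_
  refine tendsto_const_nhds.congr' ?_
  filter_upwards [eventually_ge_atTop n] with j hj
  rw [if_neg (not_lt.2 hj)]

variable (h0 : Tendsto ξ atTop (𝓝 0))
include hpos h0

theorem abs_decRearr_trunc_sub_le (n i : ℕ) :
    |decRearr (fun j => if j < n then ξ j else 0) i - decRearr ξ i| ≤ decRearr ξ i := by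
  have hle : decRearr (fun j => if j < n then ξ j else 0) i ≤ decRearr ξ i :=
    decRearr_le_decRearr (attainsMaxOff_trunc hpos n) (attainsMaxOff_of_tendsto_zero hpos h0)
      fun j _ => by split_ifs; exacts [le_rfl, hpos j]
  have hnonneg := (attainsMaxOff_trunc hpos n).decRearr_nonneg
    (fun j => by split_ifs; exacts [hpos j, le_rfl]) i
  exact abs_sub_le_iff.2 ⟨by linarith, by linarith⟩

theorem decRearr_trunc_eq {n i : ℕ} (h : greedySet ξ (i + 1) ⊆ range n) :
    decRearr (fun j => if j < n then ξ j else 0) i = decRearr ξ i := by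
  have hξ := attainsMaxOff_of_tendsto_zero hpos h0
  have hξn := attainsMaxOff_trunc hpos n
  refine le_antisymm (decRearr_le_decRearr hξn hξ fun j _ => ?_)
    (decRearr_le_decRearr hξ hξn fun j hj => by rw [if_pos (mem_range.1 (h hj))])
  split_ifs
  exacts [le_rfl, hpos j]

end Truncation

theorem tendsto_of_forall_eventually_le {ι κ α : Type*} [LinearOrder α] [TopologicalSpace α]
    [OrderTopology α] {l : Filter ι} {l' : Filter κ} [l'.NeBot] {a : ι → α} {b : κ → α} {c : α}
    (ha : ∀ n, c ≤ a n) (hb : Tendsto b l' (𝓝 c)) (h : ∀ m, ∀ᶠ n in l, a n ≤ b m) :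
    Tendsto a l (𝓝 c) := by
  rw [tendsto_order]
  refine ⟨fun d hd => Eventually.of_forall fun n => hd.trans_le (ha n), fun ε hε => ?_⟩
  obtain ⟨m, hm⟩ := (hb.eventually (gt_mem_nhds hε)).exists
  exact (h m).mono fun n hn => hn.trans_lt hm

/-- For a regular symmetric norm `Φ` and `ξ ∈ ℓ_Φ^+`, the nonincreasing
rearrangements of the truncations `ξ^(n) = (ξ_1,…,ξ_n,0,0,…)` converge in the
norm `Φ` to the nonincreasing rearrangement of `ξ`. -/
theorem decRearr_trunc_tendsto (Φ : SymmetricNorm) (hΦ : Φ.Regular)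
    (ξ : ℕ → ℝ) (hξ : MemLPhiPlus Φ ξ) :
    Filter.Tendsto
      (fun n => Φ.ext fun i =>
        |decRearr (fun j => if j < n then ξ j else 0) i - decRearr ξ i|)
      Filter.atTop (nhds 0) := by
  have hμ := memLPhi_decRearr hξ
  obtain ⟨hpos, h0, -⟩ := hξ
  obtain ⟨_, hμL⟩ := hμ.2
  have hbdd := hμL.bddAbove_range
  have hdom : ∀ n i, |(|decRearr (fun j => if j < n then ξ j else 0) i - decRearr ξ i|)|
      ≤ |decRearr ξ i| := fun n i => by
    rw [abs_abs]
    exact (abs_decRearr_trunc_sub_le hpos h0 n i).trans (le_abs_self _)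
  refine tendsto_of_forall_eventually_le (fun n => SymmetricNorm.ext_nonneg
    (SymmetricNorm.bddAbove_toFun_truncF_of_abs_le (hdom n) hbdd)) (hΦ _ hμ) fun M => ?_
  obtain ⟨N, hN⟩ := exists_nat_subset_range (greedySet ξ M)
  filter_upwards [eventually_ge_atTop N] with n hn
  refine SymmetricNorm.ext_le_ext_shift (fun i hi => ?_) (hdom n) hbdd
  have hsub := (greedySet_mono ξ hi).trans (hN.trans (range_subset_range.2 hn))
  rw [decRearr_trunc_eq hpos h0 hsub, sub_self, abs_zero]
end

section
/- If Φ is a regular symmetric norm and (X, d) is a separable metric space with basepoint x_0, then the metric space S_Φ(X, x_0) of Φ-summable multisets is separable; moreover the finite-rank multisets are dense in S_Φ(X, x_0). -/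
open Filter

open scoped Classical

variable {X : Type*} [MetricSpace X]

/-- `s : ℕ → X` is an enumeration of the countable multiset `S` in `(X, x₀)`:
every point other than the basepoint occurs in `s` exactly according to its
multiplicity in `S`. -/
def IsEnum (x0 : X) (S : X → ℕ∞) (s : ℕ → X) : Prop :=
  ∀ x, x ≠ x0 → S x = {i : ℕ | s i = x}.encard

/-- A countable multiset in `(X, x₀)`: a multiplicity function in which the
basepoint is the only point of infinite multiplicity and whose support is
countable. -/
def IsCMultiset (x0 : X) (S : X → ℕ∞) : Prop :=
  S x0 = ⊤ ∧ (∀ x, x ≠ x0 → S x ≠ ⊤) ∧ {x | S x ≠ 0}.Countable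

/-- Membership in `S_Φ(X, x₀)`: a countable multiset whose points `s_i` satisfy
`(d(x₀, s_i))_i ∈ ℓ_Φ`. -/
def MemSPhi (Φ : SymmetricNorm) (x0 : X) (S : X → ℕ∞) : Prop :=
  IsCMultiset x0 S ∧ ∃ s : ℕ → X, IsEnum x0 S s ∧ MemLPhi Φ fun i => dist x0 (s i)

/-- The distance `d_Φ(S, T)`: the infimum over pairs of enumerations `(s_i), (t_i)`
of `S, T` of `Φ(d(s_1,t_1), d(s_2,t_2), …)`. -/
noncomputable def dPhi (Φ : SymmetricNorm) (x0 : X) (S T : X → ℕ∞) : ℝ :=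
  sInf {r | ∃ s t : ℕ → X, IsEnum x0 S s ∧ IsEnum x0 T t ∧
    MemLPhi Φ (fun i => dist (s i) (t i)) ∧ r = Φ.ext fun i => dist (s i) (t i)}

/-- The sum of two multisets (addition of multiplicities away from the basepoint). -/
noncomputable def msum (x0 : X) (S T : X → ℕ∞) : X → ℕ∞ := fun x => if x = x0 then ⊤ else S x + T x

/-- The difference of two multisets (subtraction of multiplicities away from the
basepoint). -/
noncomputable def mdiff (x0 : X) (S T : X → ℕ∞) : X → ℕ∞ := fun x => if x = x0 then ⊤ else S x - T x

/-- The intersection of a multiset with a subset `V ⊆ X`. -/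
noncomputable def minter (x0 : X) (S : X → ℕ∞) (V : Set X) : X → ℕ∞ :=
  fun x => if x = x0 then ⊤ else if x ∈ V then S x else 0

/-- The multiset `S` has rank `n`: its total multiplicity away from the basepoint
is `n`, i.e. its non-basepoint part can be listed by a tuple of length `n`. -/
def HasRank (x0 : X) (S : X → ℕ∞) (n : ℕ) : Prop :=
  ∃ f : Fin n → X, (∀ i, f i ≠ x0) ∧ ∀ x, x ≠ x0 → S x = {i : Fin n | f i = x}.encard

/-!
Take an enumeration `(s_i)` of `S` with `(d(x₀, s_i))_i ∈ ℓ_Φ`. By regularity there is an `n`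
with `Φ(d(x₀, s_n), d(x₀, s_{n+1}), …) < ε/2`; replace `s_0, …, s_{n-1}` by points `q_i` of a
countable dense set with `∑ d(s_i, q_i) < ε/2`. Pairing `s_i` with `q_i` for `i < n` and with
`x₀` afterwards, the triangle inequality for `Φ` bounds the `d_Φ`-distance from `S` to the
finite multiset `{q_0, …, q_{n-1}}` by `ε`. There are only countably many such finite multisets.
-/

lemma truncF_apply (ξ : ℕ → ℝ) (m j : ℕ) : truncF ξ m j = if j < m then ξ j else 0 := by
  simp [truncF, Finsupp.finsetSum_apply, Finsupp.single_apply]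

lemma erase_truncF_succ (ξ : ℕ → ℝ) (m : ℕ) :
    (truncF ξ (m + 1)).erase m = truncF ξ m := by
  ext j
  rw [Finsupp.erase_apply, truncF_apply, truncF_apply]
  split_ifs <;> first | rfl | omega

lemma erase_truncF_indicator_Ici (ξ : ℕ → ℝ) (n k : ℕ) :
    (truncF ((Set.Ici n).indicator ξ) k).erase n
      = truncF ((Set.Ici (n + 1)).indicator ξ) k := by
  ext j
  simp only [Finsupp.erase_apply, truncF_apply, Set.indicator_apply, Set.mem_Ici]
  split_ifs <;> first | rfl | omega

lemma truncF_eq_truncF_min_add_indicator_Ici (ξ : ℕ → ℝ) (n k : ℕ) :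
    truncF ξ k = truncF ξ (min k n) + truncF ((Set.Ici n).indicator ξ) k := by
  ext j
  simp only [Finsupp.add_apply, truncF_apply, Set.indicator_apply, Set.mem_Ici]
  split_ifs <;> first | omega | simp

/-- The rotation of `{0, …, n + m - 1}` moving `{0, …, m - 1}` onto `{n, …, n + m - 1}`. -/
def prefixRotation (n m : ℕ) : Equiv.Perm ℕ where
  toFun a := if a < m then a + n else if a < n + m then a - m else a
  invFun b := if b < n then b + m else if b < n + m then b - n else b
  left_inv a := by dsimp only; split_ifs <;> omega
  right_inv b := by dsimp only; split_ifs <;> omega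

namespace SymmetricNorm

variable (Φ : SymmetricNorm)

lemma map_zero : Φ.toFun 0 = 0 := by
  simpa using Φ.smul_eq 0 0

lemma map_single (i : ℕ) (c : ℝ) : Φ.toFun (Finsupp.single i c) = |c| := by
  have hperm : Finsupp.single i c
      = Finsupp.equivMapDomain (Equiv.swap 0 i) (Finsupp.single 0 c) := by
    rw [Finsupp.equivMapDomain_single, Equiv.swap_apply_left]
  rw [hperm, Φ.perm_invariant, show Finsupp.single 0 c = c • Finsupp.single 0 (1 : ℝ) by simp,
    Φ.smul_eq, Φ.norm_single, mul_one]

/-- With `w = v.erase i` and `b = v - w`, the vectors `w + b` and `w - b` have the same absolute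
values, so `2 Φ(w) = Φ((w + b) + (w - b)) ≤ 2 Φ(v)`. -/
lemma map_erase_le (v : ℕ →₀ ℝ) (i : ℕ) : Φ.toFun (v.erase i) ≤ Φ.toFun v := by
  set w := v.erase i
  set b := Finsupp.single i (v i)
  have hv : w + b = v := Finsupp.erase_add_single i v
  have habs : Finsupp.mapRange (fun a => |a|) abs_zero (w - b)
      = Finsupp.mapRange (fun a => |a|) abs_zero (w + b) := by
    ext j
    by_cases hj : j = i
    · subst hj; simp [w, b]
    · simp [w, b, Ne.symm hj]
  have hflip : Φ.toFun (w - b) = Φ.toFun v := by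
    rw [← Φ.abs_invariant, habs, Φ.abs_invariant, hv]
  have htwice : (2 : ℝ) • w = (w + b) + (w - b) := by
    rw [two_smul]; abel
  have := Φ.add_le (w + b) (w - b)
  rw [← htwice, Φ.smul_eq, hv, hflip] at this
  norm_num at this
  linarith

lemma monotone_map_truncF (ξ : ℕ → ℝ) : Monotone fun m => Φ.toFun (truncF ξ m) :=
  monotone_nat_of_le_succ fun m => by
    simpa only [erase_truncF_succ] using Φ.map_erase_le (truncF ξ (m + 1)) m

lemma map_truncF_le_sum_abs (ξ : ℕ → ℝ) (m : ℕ) :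
    Φ.toFun (truncF ξ m) ≤ ∑ i ∈ Finset.range m, |ξ i| := by
  induction m with
  | zero => simp [truncF, map_zero]
  | succ m ih =>
    rw [truncF, Finset.sum_range_succ, Finset.sum_range_succ, ← map_single Φ m]
    exact (Φ.add_le _ _).trans (add_le_add_left ih _)

lemma map_truncF_indicator_Ici_le (ξ : ℕ → ℝ) (n k : ℕ) :
    Φ.toFun (truncF ((Set.Ici n).indicator ξ) k) ≤ Φ.toFun (truncF ξ k) := by
  induction n with
  | zero => simp
  | succ n ih => exact (erase_truncF_indicator_Ici ξ n k ▸ Φ.map_erase_le _ n).trans ih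

lemma map_truncF_shift (ξ : ℕ → ℝ) (n m : ℕ) :
    Φ.toFun (truncF (fun i => ξ (n + i)) m)
      = Φ.toFun (truncF ((Set.Ici n).indicator ξ) (n + m)) := by
  rw [← Φ.perm_invariant (prefixRotation n m)]
  congr 1
  ext j
  simp only [Finsupp.equivMapDomain_apply, truncF_apply, Set.indicator_apply, Set.mem_Ici,
    prefixRotation, Equiv.coe_fn_symm_mk]
  split_ifs <;> first | rfl | omega | (congr 1; omega)

lemma map_truncF_shift_le (ξ : ℕ → ℝ) (n m : ℕ) :
    Φ.toFun (truncF (fun i => ξ (n + i)) m) ≤ Φ.toFun (truncF ξ (n + m)) :=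
  (Φ.map_truncF_shift ξ n m).le.trans (Φ.map_truncF_indicator_Ici_le ξ n _)

lemma map_truncF_le_add_shift (ξ : ℕ → ℝ) (n k : ℕ) :
    Φ.toFun (truncF ξ k)
      ≤ Φ.toFun (truncF ξ n) + Φ.toFun (truncF (fun i => ξ (n + i)) k) := by
  rw [truncF_eq_truncF_min_add_indicator_Ici ξ n k, map_truncF_shift]
  exact (Φ.add_le _ _).trans (add_le_add (Φ.monotone_map_truncF ξ (min_le_right k n))
    (Φ.monotone_map_truncF _ (Nat.le_add_left k n)))

lemma tendsto_map_truncF_ext {ξ : ℕ → ℝ} {C : ℝ} (h : ∀ m, Φ.toFun (truncF ξ m) ≤ C) :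
    Tendsto (fun m => Φ.toFun (truncF ξ m)) atTop (nhds (Φ.ext ξ)) := by
  have hlim := tendsto_atTop_ciSup (Φ.monotone_map_truncF ξ) ⟨C, Set.forall_mem_range.2 h⟩
  rwa [SymmetricNorm.ext, hlim.limUnder_eq]

lemma ext_le {ξ : ℕ → ℝ} {C : ℝ} (h : ∀ m, Φ.toFun (truncF ξ m) ≤ C) : Φ.ext ξ ≤ C :=
  le_of_tendsto' (Φ.tendsto_map_truncF_ext h) h

lemma map_truncF_le_ext {ξ : ℕ → ℝ} {L : ℝ}
    (h : Tendsto (fun m => Φ.toFun (truncF ξ m)) atTop (nhds L)) (m : ℕ) :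
    Φ.toFun (truncF ξ m) ≤ Φ.ext ξ := by
  rw [SymmetricNorm.ext, h.limUnder_eq]
  exact (Φ.monotone_map_truncF ξ).ge_of_tendsto h m

lemma ext_nonneg_s15 {ξ : ℕ → ℝ} (hξ : MemLPhi Φ ξ) : 0 ≤ Φ.ext ξ := by
  obtain ⟨-, L, hL⟩ := hξ
  rw [SymmetricNorm.ext, hL.limUnder_eq]
  exact ge_of_tendsto' hL fun m => Φ.nonneg _

lemma memLPhi_of_eq_zero {ξ : ℕ → ℝ} {n : ℕ} (h : ∀ i, n ≤ i → ξ i = 0) : MemLPhi Φ ξ := by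
  have htail : (fun i => ξ (n + i)) = fun _ => 0 := funext fun i => h _ (Nat.le_add_right n i)
  have hzero : ∀ k, truncF (fun _ => 0) k = 0 := fun k => by simp [truncF]
  have hbound : ∀ k, Φ.toFun (truncF ξ k) ≤ Φ.toFun (truncF ξ n) := fun k => by
    simpa [htail, hzero, map_zero] using Φ.map_truncF_le_add_shift ξ n k
  exact ⟨tendsto_const_nhds.congr' ((eventually_ge_atTop n).mono fun i hi => (h i hi).symm),
    _, Φ.tendsto_map_truncF_ext hbound⟩

end SymmetricNorm

section Family

variable {α : Type*}

noncomputable def ofFamily {ι : Type*} (x0 : α) (g : ι → α) : α → ℕ∞ :=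
  fun x => if x = x0 then ⊤ else {i | g i = x}.encard

noncomputable def padEnum (x0 : α) {n : ℕ} (q : Fin n → α) : ℕ → α :=
  fun i => if h : i < n then q ⟨i, h⟩ else x0

lemma isEnum_padEnum (x0 : α) {n : ℕ} (q : Fin n → α) :
    IsEnum x0 (ofFamily x0 q) (padEnum x0 q) := by
  intro x hx
  rw [ofFamily, if_neg hx, ← Fin.val_injective.encard_image]
  congr 1
  ext i
  by_cases hi : i < n
  · simp only [padEnum, hi, dite_true, Set.mem_image, Set.mem_ofPred_eq]
    exact ⟨by rintro ⟨j, hj, rfl⟩; exact hj, fun h => ⟨⟨i, hi⟩, h, rfl⟩⟩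
  · simp only [padEnum, hi, dite_false, Set.mem_image, Set.mem_ofPred_eq]
    exact ⟨by rintro ⟨j, -, rfl⟩; exact absurd j.2 hi, fun h => absurd h.symm hx⟩

lemma exists_hasRank_ofFamily (x0 : α) {ι : Type*} [Fintype ι] (g : ι → α) :
    ∃ n, HasRank x0 (ofFamily x0 g) n := by
  let e := Fintype.equivFin {i // g i ≠ x0}
  refine ⟨_, fun j => g (e.symm j), fun j => (e.symm j).2, fun x hx => ?_⟩
  rw [ofFamily, if_neg hx, ← (Subtype.val_injective.comp e.symm.injective).encard_image]
  congr 1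
  ext i
  constructor
  · intro hi
    exact ⟨e ⟨i, hi ▸ hx⟩, by simpa using hi, by simp⟩
  · rintro ⟨j, hj, rfl⟩
    exact hj

end Family

lemma memSPhi_ofFamily (Φ : SymmetricNorm) (x0 : X) {n : ℕ} (q : Fin n → X) :
    MemSPhi Φ x0 (ofFamily x0 q) := by
  refine ⟨⟨if_pos rfl, fun x hx => ?_, ?_⟩, padEnum x0 q, isEnum_padEnum x0 q,
    Φ.memLPhi_of_eq_zero (n := n) fun i hi => by simp [padEnum, Nat.not_lt.2 hi]⟩
  · rw [ofFamily, if_neg hx]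
    exact (Set.toFinite _).encard_lt_top.ne
  · refine ((Set.finite_range q).countable.insert x0).mono fun x hx => ?_
    by_cases h : x = x0
    · exact Or.inl h
    · simp only [Set.mem_ofPred_eq, ofFamily, if_neg h, Set.encard_ne_zero] at hx
      obtain ⟨i, hi⟩ := hx
      exact Or.inr ⟨i, hi⟩

lemma dPhi_le_ext {Φ : SymmetricNorm} {x0 : X} {S T : X → ℕ∞} {s t : ℕ → X}
    (hs : IsEnum x0 S s) (ht : IsEnum x0 T t) (hst : MemLPhi Φ fun i => dist (s i) (t i)) :
    dPhi Φ x0 S T ≤ Φ.ext fun i => dist (s i) (t i) :=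
  csInf_le ⟨0, by rintro _ ⟨s, t, -, -, h, rfl⟩; exact Φ.ext_nonneg_s15 h⟩ ⟨s, t, hs, ht, hst, rfl⟩

lemma dPhi_ofFamily_le {Φ : SymmetricNorm} {x0 : X} {S : X → ℕ∞} {s : ℕ → X}
    (hs : IsEnum x0 S s) (hsΦ : MemLPhi Φ fun i => dist x0 (s i)) {n : ℕ} (q : Fin n → X) :
    dPhi Φ x0 S (ofFamily x0 q)
      ≤ ∑ i : Fin n, dist (s i) (q i) + Φ.ext fun i => dist x0 (s (n + i)) := by
  obtain ⟨hs0, L, hL⟩ := hsΦ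
  set ξ : ℕ → ℝ := fun i => dist (s i) (padEnum x0 q i)
  have hshift : (fun i => ξ (n + i)) = fun i => dist x0 (s (n + i)) := by
    funext i
    simp [ξ, padEnum, dist_comm]
  have hhead : Φ.toFun (truncF ξ n) ≤ ∑ i : Fin n, dist (s i) (q i) := by
    refine (Φ.map_truncF_le_sum_abs ξ n).trans_eq ?_
    rw [← Fin.sum_univ_eq_sum_range]
    simp [ξ, padEnum]
  have htail : ∀ m, Φ.toFun (truncF (fun i => dist x0 (s (n + i))) m)
      ≤ Φ.ext fun i => dist x0 (s i) :=
    fun m => (Φ.map_truncF_shift_le _ n m).trans (Φ.map_truncF_le_ext hL _)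
  have hbound : ∀ k, Φ.toFun (truncF ξ k)
      ≤ ∑ i : Fin n, dist (s i) (q i) + Φ.ext fun i => dist x0 (s (n + i)) := fun k => by
    refine (Φ.map_truncF_le_add_shift ξ n k).trans (add_le_add hhead ?_)
    rw [hshift]
    exact Φ.map_truncF_le_ext (Φ.tendsto_map_truncF_ext htail) k
  have hξ : MemLPhi Φ ξ := by
    refine ⟨hs0.congr' ((eventually_ge_atTop n).mono fun i hi => ?_), _,
      Φ.tendsto_map_truncF_ext hbound⟩
    simp [ξ, padEnum, Nat.not_lt.2 hi, dist_comm]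
  exact (dPhi_le_ext hs (isEnum_padEnum x0 q) hξ).trans (Φ.ext_le hbound)

lemma exists_ofFamily_dPhi_lt {Φ : SymmetricNorm} (hΦ : Φ.Regular) {x0 : X} {S : X → ℕ∞}
    (hS : MemSPhi Φ x0 S) {Q : Set X} (hQ : Dense Q) {ε : ℝ} (hε : 0 < ε) :
    ∃ (n : ℕ) (q : Fin n → X), (∀ i, q i ∈ Q) ∧ dPhi Φ x0 S (ofFamily x0 q) < ε := by
  obtain ⟨-, s, hs, hsΦ⟩ := hS
  obtain ⟨n, hn⟩ := ((hΦ _ hsΦ).eventually (gt_mem_nhds (half_pos hε))).exists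
  have hδ : 0 < ε / (2 * (n + 1)) := by positivity
  choose q hqQ hq using fun i : Fin n => hQ.exists_dist_lt (s i) hδ
  refine ⟨n, q, hqQ, (dPhi_ofFamily_le hs hsΦ q).trans_lt ?_⟩
  have hsum : ∑ i : Fin n, dist (s i) (q i) < ε / 2 :=
    calc ∑ i : Fin n, dist (s i) (q i) ≤ ∑ _i : Fin n, ε / (2 * (n + 1)) :=
          Finset.sum_le_sum fun i _ => (hq i).le
      _ = ε / 2 * (n / (n + 1)) := by
          simp only [Finset.sum_const, Finset.card_univ, Fintype.card_fin, nsmul_eq_mul]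
          field_simp
      _ < ε / 2 :=
          mul_lt_of_lt_one_right (half_pos hε) ((div_lt_one (by positivity)).2 (by linarith))
  linarith

/-- If `Φ` is a regular symmetric norm and `X` is a separable metric space with
basepoint `x₀`, then `S_Φ(X, x₀)` is separable; moreover the finite-rank
multisets are dense in `S_Φ(X, x₀)`. -/
theorem sPhi_separable (x0 : X) (Φ : SymmetricNorm) (hΦ : Φ.Regular)
    [TopologicalSpace.SeparableSpace X] :
    (∃ D : Set (X → ℕ∞), D.Countable ∧ (∀ S ∈ D, MemSPhi Φ x0 S) ∧
      ∀ S, MemSPhi Φ x0 S → ∀ ε > 0, ∃ T ∈ D, dPhi Φ x0 S T < ε) ∧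
    (∀ S, MemSPhi Φ x0 S → ∀ ε > 0,
      ∃ T, MemSPhi Φ x0 T ∧ (∃ n : ℕ, HasRank x0 T n) ∧ dPhi Φ x0 S T < ε) := by
  obtain ⟨Q, hQc, hQ⟩ := TopologicalSpace.exists_countable_dense X
  have : Countable Q := hQc.to_subtype
  refine ⟨⟨⋃ n, Set.range fun q : Fin n → Q => ofFamily x0 fun i => (q i : X),
    Set.countable_iUnion fun n => Set.countable_range _, ?_, ?_⟩, ?_⟩
  · simp only [Set.mem_iUnion, Set.mem_range]
    rintro _ ⟨n, q, rfl⟩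
    exact memSPhi_ofFamily Φ x0 _
  · intro S hS ε hε
    obtain ⟨n, q, hqQ, hlt⟩ := exists_ofFamily_dPhi_lt hΦ hS hQ hε
    exact ⟨_, Set.mem_iUnion.2 ⟨n, fun i => ⟨q i, hqQ i⟩, rfl⟩, hlt⟩
  · intro S hS ε hε
    obtain ⟨n, q, -, hlt⟩ := exists_ofFamily_dPhi_lt hΦ hS dense_univ hε
    exact ⟨_, memSPhi_ofFamily Φ x0 q, exists_hasRank_ofFamily x0 q, hlt⟩
end
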